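/- arXiv:1108.4648 — 9 statements merged into one kernel-verified Lean document; each statement's English description precedes it below -/
import Mathlib

section
/- If G is an SLC group with unique nonidentity commutator s, then s is central, s² = 1, and the map g* = g if g is central, g* = sg otherwise, is an involution (anti-automorphism of order 2) on G. -/
open scoped Classical in
/-- The canonical involution on an SLC group: `g* = g` if `g` is central and
`g* = s g` otherwise. -/
noncomputable def canonicalInvolution {G : Type*} [Group G] (s : G) (g : G) : G :=
  if g ∈ Subgroup.center G then g else s * g

/-!
Conjugates and inverses of commutators are commutators, so a unique nonidentity commutator `s`
is central and equal to its inverse. Modulo the central subgroup `⟨s⟩` the group is then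
commutative, and `g ↦ g*` reverses products: the only case needing thought is `g, h, gh` all
noncentral, where limited commutativity forbids `g` and `h` to commute, so `gh = s hg`.
-/

open scoped commutatorElement

namespace canonicalInvolution

variable {G : Type*} [Group G] {s g h : G}

theorem of_mem_center (hg : g ∈ Subgroup.center G) : canonicalInvolution s g = g :=
  if_pos hg

theorem of_notMem_center (hg : g ∉ Subgroup.center G) : canonicalInvolution s g = s * g :=
  if_neg hg

theorem involutive (hs : s ∈ Subgroup.center G) (hs2 : s ^ 2 = 1) (g : G) :
    canonicalInvolution s (canonicalInvolution s g) = g := by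
  by_cases hg : g ∈ Subgroup.center G
  · rw [of_mem_center hg, of_mem_center hg]
  · have hsg : s * g ∉ Subgroup.center G := by
      rwa [Subgroup.mul_mem_cancel_left _ hs]
    rw [of_notMem_center hg, of_notMem_center hsg, ← mul_assoc, ← sq, hs2, one_mul]

theorem mul_rev (hs : s ∈ Subgroup.center G) (hs2 : s ^ 2 = 1)
    (hnc : ∀ g h : G, g ∉ Subgroup.center G → h ∉ Subgroup.center G →
      g * h ∉ Subgroup.center G → g * h = s * (h * g))
    (g h : G) :
    canonicalInvolution s (g * h) = canonicalInvolution s h * canonicalInvolution s g := by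
  have hsx (x : G) : s * x = x * s := (Subgroup.mem_center_iff.mp hs x).symm
  have hss : s * s = 1 := by rw [← sq, hs2]
  by_cases hg : g ∈ Subgroup.center G
  · by_cases hh : h ∈ Subgroup.center G
    · rw [of_mem_center (Subgroup.mul_mem _ hg hh), of_mem_center hg, of_mem_center hh,
        Subgroup.mem_center_iff.mp hh g]
    · have hgh : g * h ∉ Subgroup.center G := by rwa [Subgroup.mul_mem_cancel_left _ hg]
      rw [of_notMem_center hgh, of_mem_center hg, of_notMem_center hh,
        ← Subgroup.mem_center_iff.mp hg h, mul_assoc]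
  · by_cases hh : h ∈ Subgroup.center G
    · have hgh : g * h ∉ Subgroup.center G := by rwa [Subgroup.mul_mem_cancel_right _ hh]
      rw [of_notMem_center hgh, of_mem_center hh, of_notMem_center hg,
        Subgroup.mem_center_iff.mp hh, ← mul_assoc, ← mul_assoc, hsx h]
    · rw [of_notMem_center hg, of_notMem_center hh, hsx h, mul_assoc h, ← mul_assoc s s, hss,
        one_mul]
      by_cases hgh : g * h ∈ Subgroup.center G
      · rw [of_mem_center hgh]
        exact mul_left_cancel (a := g) (by rw [Subgroup.mem_center_iff.mp hgh g, mul_assoc])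
      · rw [of_notMem_center hgh, hnc g h hg hh hgh, ← mul_assoc, hss, one_mul]

end canonicalInvolution

section UniqueCommutator

variable {G : Type*} [Group G] {s : G}

theorem mem_center_of_unique_commutator (hs1 : s ≠ 1) (hex : ∃ a b : G, ⁅a, b⁆ = s)
    (huniq : ∀ g h : G, ⁅g, h⁆ = 1 ∨ ⁅g, h⁆ = s) : s ∈ Subgroup.center G := by
  obtain ⟨a, b, rfl⟩ := hex
  refine Subgroup.mem_center_iff.mpr fun x => ?_
  have hconj : x * ⁅a, b⁆ * x⁻¹ = ⁅x * a * x⁻¹, x * b * x⁻¹⁆ := by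
    simpa only [MulAut.conj_apply] using map_commutatorElement (MulAut.conj x) a b
  rcases huniq (x * a * x⁻¹) (x * b * x⁻¹) with h1 | hs
  · rw [← hconj, mul_inv_eq_one, mul_eq_left] at h1
    exact absurd h1 hs1
  · rw [← hconj, mul_inv_eq_iff_eq_mul] at hs
    exact hs

theorem sq_eq_one_of_unique_commutator (hs1 : s ≠ 1) (hex : ∃ a b : G, ⁅a, b⁆ = s)
    (huniq : ∀ g h : G, ⁅g, h⁆ = 1 ∨ ⁅g, h⁆ = s) : s ^ 2 = 1 := by
  obtain ⟨a, b, rfl⟩ := hex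
  rcases huniq b a with h1 | hs
  · rw [← commutatorElement_inv, inv_eq_one] at h1
    exact absurd h1 hs1
  · rw [← commutatorElement_inv, inv_eq_iff_mul_eq_one] at hs
    rw [sq, hs]

theorem mul_eq_mul_mul_swap_of_notMem_center (huniq : ∀ g h : G, ⁅g, h⁆ = 1 ∨ ⁅g, h⁆ = s)
    (hLC : ∀ g h : G, g * h = h * g →
      g ∈ Subgroup.center G ∨ h ∈ Subgroup.center G ∨ g * h ∈ Subgroup.center G)
    {g h : G} (hg : g ∉ Subgroup.center G) (hh : h ∉ Subgroup.center G)
    (hgh : g * h ∉ Subgroup.center G) : g * h = s * (h * g) := by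
  rcases huniq g h with hcomm | hs
  · rw [commutatorElement_eq_one_iff_mul_comm] at hcomm
    rcases hLC g h hcomm with h' | h' | h' <;> contradiction
  · rw [← hs, commutatorElement_def]
    group

end UniqueCommutator

open scoped commutatorElement in
/-- in an SLC group with unique nonidentity commutator `s`, the
element `s` is central, `s² = 1`, and the canonical map is an involution
(anti-automorphism of order 2) on `G`. -/
theorem slc_canonical_involution {G : Type*} [Group G] (s : G) (hs1 : s ≠ 1)
    (hex : ∃ g h : G, ⁅g, h⁆ = s)
    (huniq : ∀ g h : G, ⁅g, h⁆ = 1 ∨ ⁅g, h⁆ = s)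
    (hLC : ∀ g h : G, g * h = h * g →
      g ∈ Subgroup.center G ∨ h ∈ Subgroup.center G ∨ g * h ∈ Subgroup.center G) :
    s ∈ Subgroup.center G ∧ s ^ 2 = 1 ∧
    (∀ g h : G, canonicalInvolution s (g * h) =
        canonicalInvolution s h * canonicalInvolution s g) ∧
    (∀ g : G, canonicalInvolution s (canonicalInvolution s g) = g) := by
  have hs := mem_center_of_unique_commutator hs1 hex huniq
  have hs2 := sq_eq_one_of_unique_commutator hs1 hex huniq
  exact ⟨hs, hs2,
    canonicalInvolution.mul_rev hs hs2 fun _ _ => mul_eq_mul_mul_swap_of_notMem_center huniq hLC,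
    canonicalInvolution.involutive hs hs2⟩
end

section
/- Let ♯ be an oriented group involution on RG with compatible orientation σ having kernel N of index 2. Then an element α ∈ RG is skew-symmetric (α♯ = −α) if and only if α is an R-linear combination of elements of the four sets: {α_n n : n ∈ N, n* = n, 2α_n = 0}, {n − n* : n ∈ N, n* ≠ n}, {x : x ∉ N, x* = x}, and {x + x* : x ∉ N, x* ≠ x}. -/
/-- The oriented involution on the group ring. -/
noncomputable def orientedSharp {R : Type*} [CommRing R] {G : Type*} [Group G]
    (st : G → G) (σ : G →* ℤˣ) (α : MonoidAlgebra R G) : MonoidAlgebra R G :=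
  Finsupp.sum α.coeff fun g r => MonoidAlgebra.single (st g) (((σ g : ℤ) : R) * r)

/-!
Since `(α♯)(g*) = σ(g) α(g)`, the element `α` is skew-symmetric iff `α(g*) = -σ(g) α(g)` for
every `g`, so `α` is determined on each orbit `{g, g*}` by `α(g)`. On that orbit it is then
`α(g)` times one of the four generators, according to whether `g ∈ N` and whether `g* = g`
(for `g ∈ N` with `g* = g` the condition reads `2 α(g) = 0`). Subtracting it leaves a
skew-symmetric element of smaller support.
-/

open MonoidAlgebra Module.End Submodule

section
variable {R : Type*} [CommRing R] {G : Type*} [Group G] {st : G → G} {σ : G →* ℤˣ}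

lemma units_eq_neg_one_of_notMem_ker {x : G} (hx : x ∉ σ.ker) : σ x = -1 :=
  (Int.units_eq_one_or (σ x)).resolve_left hx

variable (R st σ) in
noncomputable def orientedSharpLinearMap : Module.End R (MonoidAlgebra R G) where
  toFun := orientedSharp st σ
  map_add' α β := Finsupp.sum_add_index' (by simp) (by simp [mul_add, single_add])
  map_smul' c α := by
    simp only [orientedSharp, coeff_smul, RingHom.id_apply]
    rw [Finsupp.sum_smul_index (by simp), Finsupp.smul_sum]
    simp [mul_left_comm, smul_single]

lemma orientedSharpLinearMap_apply (α : MonoidAlgebra R G) :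
    orientedSharpLinearMap R st σ α = orientedSharp st σ α := rfl

@[simp]
lemma orientedSharpLinearMap_single (g : G) (r : R) :
    orientedSharpLinearMap R st σ (single g r) = single (st g) (((σ g : ℤ) : R) * r) := by
  simp [orientedSharpLinearMap_apply, orientedSharp, coeff_single]

lemma coeff_orientedSharp_apply_st (hst : Function.Involutive st) (α : MonoidAlgebra R G)
    (g : G) : (orientedSharp st σ α).coeff (st g) = ((σ g : ℤ) : R) * α.coeff g := by
  classical
  rw [orientedSharp, coeff_finsuppSum, Finsupp.sum_apply, Finsupp.sum, Finset.sum_eq_single g]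
  · simp
  · intro h _ hne
    simp [hst.injective.ne hne]
  · intro hg
    simp [Finsupp.notMem_support_iff.mp hg]

lemma mem_eigenspace_orientedSharp_iff {α : MonoidAlgebra R G} :
    α ∈ eigenspace (orientedSharpLinearMap R st σ) (-1) ↔ orientedSharp st σ α = -α := by
  rw [mem_eigenspace_iff, neg_one_smul, orientedSharpLinearMap_apply]

lemma coeff_st_of_mem_eigenspace (hst : Function.Involutive st)
    {α : MonoidAlgebra R G} (hα : α ∈ eigenspace (orientedSharpLinearMap R st σ) (-1))
    (g : G) :
    α.coeff (st g) = -(((σ g : ℤ) : R) * α.coeff g) := by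
  rw [← coeff_orientedSharp_apply_st hst, mem_eigenspace_orientedSharp_iff.1 hα, coeff_neg,
    Finsupp.neg_apply, neg_neg]

variable (R st σ) in
def skewGenerators : Set (MonoidAlgebra R G) :=
  {β | ∃ n ∈ σ.ker, st n = n ∧ ∃ r : R, 2 * r = 0 ∧ β = single n r} ∪
  {β | ∃ n ∈ σ.ker, st n ≠ n ∧ β = single n (1 : R) - single (st n) (1 : R)} ∪
  {β | ∃ x : G, x ∉ σ.ker ∧ st x = x ∧ β = single x (1 : R)} ∪
  {β | ∃ x : G, x ∉ σ.ker ∧ st x ≠ x ∧ β = single x (1 : R) + single (st x) (1 : R)}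

lemma span_skewGenerators_le_eigenspace (hst : Function.Involutive st)
    (hcompat : ∀ g : G, σ (st g) = σ g) :
    span R (skewGenerators R st σ) ≤ eigenspace (orientedSharpLinearMap R st σ) (-1) := by
  rw [span_le]
  rintro β (((⟨n, hn, hfix, r, hr, rfl⟩ | ⟨n, hn, hfix, rfl⟩) | ⟨x, hx, hfix, rfl⟩) |
      ⟨x, hx, hfix, rfl⟩) <;>
    simp only [SetLike.mem_coe, mem_eigenspace_iff, neg_one_smul]
  · rw [MonoidHom.mem_ker] at hn
    simp [hfix, hn, ← single_neg, neg_eq_of_add_eq_zero_left (two_mul r ▸ hr)]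
  · rw [MonoidHom.mem_ker] at hn
    simp [hst n, hcompat, hn]
  · simp [hfix, units_eq_neg_one_of_notMem_ker hx, single_neg]
  · simp [hst x, hcompat, units_eq_neg_one_of_notMem_ker hx, single_neg, add_comm]

lemma exists_mem_span_skewGenerators_coeff_eq (hst : Function.Involutive st)
    {α : MonoidAlgebra R G} (hα : α ∈ eigenspace (orientedSharpLinearMap R st σ) (-1))
    (g : G) :
    ∃ γ ∈ span R (skewGenerators R st σ),
      γ ∈ supported R R {g, st g} ∧ γ.coeff g = α.coeff g := by
  have hg : g ∈ ({g, st g} : Set G) := Set.mem_insert _ _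
  have hstg : st g ∈ ({g, st g} : Set G) := Set.mem_insert_of_mem _ rfl
  have single_mem {h : G} (r : R) (h_mem : h ∈ ({g, st g} : Set G)) :
      single h r ∈ supported R R {g, st g} :=
    Finsupp.single_mem_supported R r h_mem
  by_cases hker : g ∈ σ.ker <;> by_cases hfix : st g = g
  · have h2 : 2 * α.coeff g = 0 := by
      have hα_g := coeff_st_of_mem_eigenspace hst hα g
      simp only [hfix, MonoidHom.mem_ker.1 hker, Units.val_one, Int.cast_one, one_mul] at hα_g
      linear_combination hα_g
    exact ⟨single g (α.coeff g),
      subset_span (Or.inl (Or.inl (Or.inl ⟨g, hker, hfix, _, h2, rfl⟩))),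
      single_mem _ hg, by simp⟩
  · exact ⟨α.coeff g • (single g 1 - single (st g) 1),
      smul_mem _ _ (subset_span (Or.inl (Or.inl (Or.inr ⟨g, hker, hfix, rfl⟩)))),
      smul_mem _ _ (sub_mem (single_mem _ hg) (single_mem _ hstg)),
      by simp [coeff_sub, hfix]⟩
  · exact ⟨α.coeff g • single g 1,
      smul_mem _ _ (subset_span (Or.inl (Or.inr ⟨g, hker, hfix, rfl⟩))),
      smul_mem _ _ (single_mem _ hg), by simp⟩
  · exact ⟨α.coeff g • (single g 1 + single (st g) 1),
      smul_mem _ _ (subset_span (Or.inr ⟨g, hker, hfix, rfl⟩)),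
      smul_mem _ _ (add_mem (single_mem _ hg) (single_mem _ hstg)),
      by simp [coeff_add, hfix]⟩

lemma support_coeff_sub_subset_erase [DecidableEq G] (hst : Function.Involutive st)
    {α γ : MonoidAlgebra R G}
    (hαγ : α - γ ∈ eigenspace (orientedSharpLinearMap R st σ) (-1)) {g : G}
    (hγ : γ ∈ supported R R {g, st g}) (hγg : γ.coeff g = α.coeff g) :
    (α - γ).coeff.support ⊆ α.coeff.support.erase g := by
  intro h hh
  rw [Finsupp.mem_support_iff] at hh
  have hg : (α - γ).coeff g = 0 := by simp [coeff_sub, hγg]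
  have hstg : (α - γ).coeff (st g) = 0 := by
    rw [coeff_st_of_mem_eigenspace hst hαγ, hg, mul_zero, neg_zero]
  have h_orbit : h ∉ ({g, st g} : Set G) := by
    rintro (rfl | rfl)
    exacts [hh hg, hh hstg]
  have hγh : γ.coeff h = 0 := mem_supported'.1 hγ h h_orbit
  rw [Finset.mem_erase, Finsupp.mem_support_iff]
  exact ⟨fun h_eq => h_orbit (Or.inl h_eq), by simpa [coeff_sub, hγh] using hh⟩

lemma eigenspace_le_span_skewGenerators (hst : Function.Involutive st)
    (hcompat : ∀ g : G, σ (st g) = σ g) :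
    eigenspace (orientedSharpLinearMap R st σ) (-1) ≤ span R (skewGenerators R st σ) := by
  classical
  intro α hα
  induction hs : α.coeff.support using Finset.strongInduction generalizing α with
  | H s ih =>
  obtain rfl | ⟨g, hg⟩ := s.eq_empty_or_nonempty
  · rw [Finsupp.support_eq_empty, coeff_eq_zero] at hs
    exact hs ▸ zero_mem _
  obtain ⟨γ, hγ_span, hγ_supp, hγg⟩ := exists_mem_span_skewGenerators_coeff_eq hst hα g
  have hαγ : α - γ ∈ eigenspace (orientedSharpLinearMap R st σ) (-1) :=
    sub_mem hα (span_skewGenerators_le_eigenspace hst hcompat hγ_span)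
  have h_lt : (α - γ).coeff.support ⊂ s := hs ▸
    (support_coeff_sub_subset_erase hst hαγ hγ_supp hγg).trans_ssubset
      (Finset.erase_ssubset (hs ▸ hg))
  simpa using add_mem (ih _ h_lt hαγ rfl) hγ_span

lemma eigenspace_eq_span_skewGenerators (hst : Function.Involutive st)
    (hcompat : ∀ g : G, σ (st g) = σ g) :
    eigenspace (orientedSharpLinearMap R st σ) (-1) = span R (skewGenerators R st σ) :=
  le_antisymm (eigenspace_le_span_skewGenerators hst hcompat)
    (span_skewGenerators_le_eigenspace hst hcompat)

end

theorem skew_symmetric_characterization_general {R : Type*} [CommRing R] {G : Type*} [Group G]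
    (st : G → G)
    (hst2 : ∀ g : G, st (st g) = g)
    (σ : G →* ℤˣ) (hcompat : ∀ g : G, σ (st g) = σ g)
    (α : MonoidAlgebra R G) :
    orientedSharp st σ α = -α ↔
      α ∈ Submodule.span R
        (({β | ∃ n ∈ σ.ker, st n = n ∧ ∃ r : R, 2 * r = 0 ∧ β = MonoidAlgebra.single n r} :
            Set (MonoidAlgebra R G)) ∪
         {β | ∃ n ∈ σ.ker, st n ≠ n ∧
            β = MonoidAlgebra.single n (1 : R) - MonoidAlgebra.single (st n) (1 : R)} ∪
         {β | ∃ x : G, x ∉ σ.ker ∧ st x = x ∧ β = MonoidAlgebra.single x (1 : R)} ∪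
         {β | ∃ x : G, x ∉ σ.ker ∧ st x ≠ x ∧
            β = MonoidAlgebra.single x (1 : R) + MonoidAlgebra.single (st x) (1 : R)}) := by
  rw [← mem_eigenspace_orientedSharp_iff, eigenspace_eq_span_skewGenerators hst2 hcompat]
  rfl

/-- an element of `RG` is skew-symmetric for the oriented
involution iff it lies in the `R`-span of the four indicated sets. -/
theorem skew_symmetric_characterization {R : Type*} [CommRing R] {G : Type*} [Group G]
    (st : G → G) (hst : ∀ g h : G, st (g * h) = st h * st g)
    (hst2 : ∀ g : G, st (st g) = g)
    (σ : G →* ℤˣ) (hcompat : ∀ g : G, σ (st g) = σ g)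
    (hidx : σ.ker.index = 2) (α : MonoidAlgebra R G) :
    orientedSharp st σ α = -α ↔
      α ∈ Submodule.span R
        (({β | ∃ n ∈ σ.ker, st n = n ∧ ∃ r : R, 2 * r = 0 ∧ β = MonoidAlgebra.single n r} :
            Set (MonoidAlgebra R G)) ∪
         {β | ∃ n ∈ σ.ker, st n ≠ n ∧
            β = MonoidAlgebra.single n (1 : R) - MonoidAlgebra.single (st n) (1 : R)} ∪
         {β | ∃ x : G, x ∉ σ.ker ∧ st x = x ∧ β = MonoidAlgebra.single x (1 : R)} ∪
         {β | ∃ x : G, x ∉ σ.ker ∧ st x ≠ x ∧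
            β = MonoidAlgebra.single x (1 : R) + MonoidAlgebra.single (st x) (1 : R)}) :=
  skew_symmetric_characterization_general st hst2 σ hcompat α
end

section
/- Suppose char R = 4, G is abelian with index-2 subgroup N, σ : G → {±1} is the homomorphism with kernel N, * is an involution on G that is the identity on N and satisfies x* ≠ x for all x ∉ N. Then the set of skew-symmetric elements (RG)⁻ under the oriented involution ♯ is anticommutative: αβ = −βα for all α, β ∈ (RG)⁻. -/
open MonoidAlgebra

section

variable {R : Type*} [CommRing R] {G : Type*} [Group G] {st : G → G} {σ : G →* ℤˣ}

lemma MonoidHom.eq_neg_one_of_notMem_ker {g : G} (hg : g ∉ σ.ker) : σ g = -1 :=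
  (Int.units_eq_one_or _).resolve_left hg

lemma st_notMem_ker (hst2 : Function.Involutive st) (hN : ∀ n ∈ σ.ker, st n = n) {g : G}
    (hg : g ∉ σ.ker) : st g ∉ σ.ker := fun h =>
  hg <| by rwa [← hst2 g, hN _ h]

lemma apply_st_eq_apply (hst2 : Function.Involutive st) (hN : ∀ n ∈ σ.ker, st n = n) (g : G) :
    σ (st g) = σ g := by
  by_cases hg : g ∈ σ.ker
  · rw [hN g hg]
  · rw [MonoidHom.eq_neg_one_of_notMem_ker hg,
      MonoidHom.eq_neg_one_of_notMem_ker (st_notMem_ker hst2 hN hg)]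

lemma st_mul_st_of_notMem_ker (hab : ∀ g h : G, g * h = h * g)
    (hst : ∀ g h : G, st (g * h) = st h * st g) (hN : ∀ n ∈ σ.ker, st n = n) {g k : G}
    (hg : g ∉ σ.ker) (hk : k ∉ σ.ker) : st g * st k = g * k := by
  have hgk : g * k ∈ σ.ker := by
    rw [MonoidHom.mem_ker, map_mul, MonoidHom.eq_neg_one_of_notMem_ker hg,
      MonoidHom.eq_neg_one_of_notMem_ker hk, neg_one_mul, neg_neg]
  rw [← hst, hab, hN _ hgk]

lemma coeff_orientedSharp (hst2 : Function.Involutive st) (α : MonoidAlgebra R G) (g : G) :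
    (orientedSharp st σ α).coeff g = ((σ (st g) : ℤ) : R) * α.coeff (st g) := by
  classical
  simp only [orientedSharp, coeff_finsuppSum, Finsupp.sum_apply, coeff_single, Finsupp.single_apply,
    hst2.eq_iff, Finsupp.sum_ite_eq', Finsupp.mem_support_iff, ne_eq, ite_not]
  exact ite_eq_right_iff.2 fun h => by rw [h, mul_zero]

lemma coeff_st_of_orientedSharp_eq_neg (hst2 : Function.Involutive st)
    (hN : ∀ n ∈ σ.ker, st n = n) {γ : MonoidAlgebra R G} (hγ : orientedSharp st σ γ = -γ)
    (g : G) : γ.coeff (st g) = -((σ g : ℤ) : R) * γ.coeff g := by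
  have h := coeff_orientedSharp (σ := σ) hst2 γ g
  rw [hγ, coeff_neg, Finsupp.neg_apply, apply_st_eq_apply hst2 hN] at h
  have hsq : ((σ g : ℤ) : R) * ((σ g : ℤ) : R) = 1 := by
    rw [← Int.cast_mul, ← Units.val_mul, Int.units_mul_self, Units.val_one, Int.cast_one]
  linear_combination (-((σ g : ℤ) : R)) * h - γ.coeff (st g) * hsq

lemma two_mul_coeff_eq_zero_of_mem_ker (hst2 : Function.Involutive st)
    (hN : ∀ n ∈ σ.ker, st n = n) {γ : MonoidAlgebra R G} (hγ : orientedSharp st σ γ = -γ)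
    {g : G} (hg : g ∈ σ.ker) : 2 * γ.coeff g = 0 := by
  have h := coeff_st_of_orientedSharp_eq_neg hst2 hN hγ g
  rw [hN g hg, MonoidHom.mem_ker.mp hg, Units.val_one, Int.cast_one] at h
  linear_combination h

lemma coeff_st_of_notMem_ker (hst2 : Function.Involutive st)
    (hN : ∀ n ∈ σ.ker, st n = n) {γ : MonoidAlgebra R G} (hγ : orientedSharp st σ γ = -γ)
    {g : G} (hg : g ∉ σ.ker) : γ.coeff (st g) = γ.coeff g := by
  rw [coeff_st_of_orientedSharp_eq_neg hst2 hN hγ, MonoidHom.eq_neg_one_of_notMem_ker hg]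
  simp

lemma st_mem_support (hst2 : Function.Involutive st)
    (hN : ∀ n ∈ σ.ker, st n = n) {γ : MonoidAlgebra R G} (hγ : orientedSharp st σ γ = -γ)
    {g : G} (hg : g ∈ γ.coeff.support) : st g ∈ γ.coeff.support := by
  have hunit : IsUnit (-((σ g : ℤ) : R)) := ((σ g).isUnit.map (Int.castRingHom R)).neg
  rw [Finsupp.mem_support_iff, coeff_st_of_orientedSharp_eq_neg hst2 hN hγ, ne_eq,
    hunit.mul_right_eq_zero]
  exact Finsupp.mem_support_iff.1 hg

lemma two_mul_ite_coeff_st [DecidableEq G] (hab : ∀ g h : G, g * h = h * g)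
    (hst : ∀ g h : G, st (g * h) = st h * st g) (hst2 : Function.Involutive st)
    (hN : ∀ n ∈ σ.ker, st n = n) {α β : MonoidAlgebra R G}
    (hα : orientedSharp st σ α = -α) (hβ : orientedSharp st σ β = -β) (g k h : G) :
    2 * (if st g * st k = h then α.coeff (st g) * β.coeff (st k) else 0) =
      2 * (if g * k = h then α.coeff g * β.coeff k else 0) := by
  by_cases hg : g ∈ σ.ker
  · have h2 := two_mul_coeff_eq_zero_of_mem_ker hst2 hN hα hg
    simp only [hN g hg, mul_ite, ← mul_assoc, h2, zero_mul, mul_zero, ite_self]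
  by_cases hk : k ∈ σ.ker
  · have h2 := two_mul_coeff_eq_zero_of_mem_ker hst2 hN hβ hk
    simp only [hN k hk, mul_ite, mul_left_comm (2 : R), h2, mul_zero, ite_self]
  rw [st_mul_st_of_notMem_ker hab hst hN hg hk, coeff_st_of_notMem_ker hst2 hN hα hg,
    coeff_st_of_notMem_ker hst2 hN hβ hk]

lemma mul_add_self_eq_zero_of_orientedSharp_eq_neg (h4 : (4 : R) = 0)
    (hab : ∀ g h : G, g * h = h * g) (hst : ∀ g h : G, st (g * h) = st h * st g)
    (hst2 : Function.Involutive st) (hN : ∀ n ∈ σ.ker, st n = n)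
    (hout : ∀ x : G, x ∉ σ.ker → st x ≠ x) {α β : MonoidAlgebra R G}
    (hα : orientedSharp st σ α = -α) (hβ : orientedSharp st σ β = -β) :
    α * β + α * β = 0 := by
  classical
  refine MonoidAlgebra.ext <| Finsupp.ext fun h => ?_
  have hsum : (α * β).coeff h = ∑ p ∈ α.coeff.support ×ˢ β.coeff.support,
      if p.1 * p.2 = h then α.coeff p.1 * β.coeff p.2 else 0 := by
    rw [coeff_mul, Finset.sum_product]
    rfl
  rw [coeff_add, Finsupp.add_apply, ← two_mul, hsum, Finset.mul_sum, coeff_zero,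
    Finsupp.zero_apply]
  refine Finset.sum_involution (fun p _ => (st p.1, st p.2)) (fun p _ => ?_) (fun p _ hp => ?_)
    (fun p hp => ?_) (fun p _ => Prod.ext (hst2 _) (hst2 _))
  · rw [two_mul_ite_coeff_st hab hst hst2 hN hα hβ]
    linear_combination (if p.1 * p.2 = h then α.coeff p.1 * β.coeff p.2 else 0) * h4
  · refine fun hfix => hp ?_
    have hp1 : p.1 ∈ σ.ker := not_not.1 fun hp1 => hout _ hp1 (congrArg Prod.fst hfix)
    have h2 := two_mul_coeff_eq_zero_of_mem_ker hst2 hN hα hp1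
    simp only [mul_ite, ← mul_assoc, h2, zero_mul, mul_zero, ite_self]
  · rw [Finset.mem_product] at hp ⊢
    exact ⟨st_mem_support hst2 hN hα hp.1, st_mem_support hst2 hN hβ hp.2⟩

end

theorem skew_anticommute_abelian_case_general {R : Type*} [CommRing R] {G : Type*} [Group G]
    (hchar : ringChar R = 4)
    (hab : ∀ g h : G, g * h = h * g)
    (st : G → G) (hst : ∀ g h : G, st (g * h) = st h * st g)
    (hst2 : ∀ g : G, st (st g) = g)
    (σ : G →* ℤˣ)
    (hN : ∀ n : G, n ∈ σ.ker → st n = n)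
    (hout : ∀ x : G, x ∉ σ.ker → st x ≠ x) :
    ∀ α β : MonoidAlgebra R G,
      orientedSharp st σ α = -α → orientedSharp st σ β = -β → α * β = -(β * α) := by
  intro α β hα hβ
  have h4 : (4 : R) = 0 := by exact_mod_cast hchar ▸ ringChar.Nat.cast_ringChar
  let _ : CommGroup G := { mul_comm := hab }
  rw [mul_comm β α]
  exact eq_neg_of_add_eq_zero_left
    (mul_add_self_eq_zero_of_orientedSharp_eq_neg h4 hab hst hst2 hN hout hα hβ)

/-- if `char R = 4`, `G` is abelian with index-2 subgroup
`N = ker σ`, `*` is the identity on `N` and moves every element outside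
`N`, then the skew-symmetric elements of `RG` anticommute. -/
theorem skew_anticommute_abelian_case {R : Type*} [CommRing R] {G : Type*} [Group G]
    (hchar : ringChar R = 4)
    (hab : ∀ g h : G, g * h = h * g)
    (st : G → G) (hst : ∀ g h : G, st (g * h) = st h * st g)
    (hst2 : ∀ g : G, st (st g) = g)
    (σ : G →* ℤˣ) (hidx : σ.ker.index = 2)
    (hN : ∀ n : G, n ∈ σ.ker → st n = n)
    (hout : ∀ x : G, x ∉ σ.ker → st x ≠ x) :
    ∀ α β : MonoidAlgebra R G,
      orientedSharp st σ α = -α → orientedSharp st σ β = -β → α * β = -(β * α) :=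
  skew_anticommute_abelian_case_general hchar hab st hst hst2 σ hN hout
end

section
/- Suppose char R = 4, G is an SLC group with unique nonidentity commutator s, * is the canonical involution (g* = g if g central, g* = sg otherwise), N is an index-2 subgroup such that all elements outside N are noncentral, and σ : G → {±1} has kernel N. Then the skew-symmetric elements (RG)⁻ anticommute. -/
open MonoidAlgebra in
example : True := trivial

section SkewAux
variable {R : Type*} [CommRing R] {G : Type*} [Group G]

lemma sharp_single (st : G → G) (σ : G →* ℤˣ) (g : G) (r : R) :
    orientedSharp st σ (MonoidAlgebra.single g r) =
      MonoidAlgebra.single (st g) (((σ g : ℤ) : R) * r) := by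
  unfold orientedSharp
  rw [MonoidAlgebra.coeff_single]
  exact Finsupp.sum_single_index (by rw [mul_zero, MonoidAlgebra.single_zero])

lemma sharp_sub (st : G → G) (σ : G →* ℤˣ) (α β : MonoidAlgebra R G) :
    orientedSharp st σ (α - β) = orientedSharp st σ α - orientedSharp st σ β := by
  unfold orientedSharp
  rw [MonoidAlgebra.coeff_sub]
  exact Finsupp.sum_sub_index (fun a b₁ b₂ => by rw [mul_sub]; exact MonoidAlgebra.single_sub _ _ _)

lemma sharp_add (st : G → G) (σ : G →* ℤˣ) (α β : MonoidAlgebra R G) :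
    orientedSharp st σ (α + β) = orientedSharp st σ α + orientedSharp st σ β := by
  unfold orientedSharp
  rw [MonoidAlgebra.coeff_add]
  exact Finsupp.sum_add_index' (fun a => by rw [mul_zero, MonoidAlgebra.single_zero])
    (fun a b₁ b₂ => by rw [mul_add]; exact MonoidAlgebra.single_add _ _ _)

lemma sharp_apply (st : G → G) (hst : Function.Involutive st) (σ : G →* ℤˣ)
    (α : MonoidAlgebra R G) (x : G) :
    (orientedSharp st σ α).coeff x = ((σ (st x) : ℤ) : R) * α.coeff (st x) := by
  classical
  unfold orientedSharp
  rw [MonoidAlgebra.coeff_finsuppSum, Finsupp.sum_apply]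
  have h1 : (α.coeff.sum fun g r => (MonoidAlgebra.single (st g) (((σ g : ℤ) : R) * r)).coeff x)
      = α.coeff.sum fun g r => if g = st x then ((σ g : ℤ) : R) * r else 0 := by
    apply Finsupp.sum_congr
    intro g _
    by_cases hgx : g = st x
    · subst hgx
      rw [if_pos rfl, hst x, MonoidAlgebra.coeff_single, Finsupp.single_eq_same]
    · have hne : st g ≠ x := fun e => hgx (by rw [← e, hst g])
      rw [if_neg hgx, MonoidAlgebra.coeff_single, Finsupp.single_eq_of_ne' hne]
  rw [h1, Finsupp.sum_ite_eq']
  split_ifs with hmem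
  · rfl
  · rw [Finsupp.notMem_support_iff.mp hmem, mul_zero]

lemma four_single (h4 : (4 : R) = 0) (a : G) (c : R) :
    MonoidAlgebra.single a c + MonoidAlgebra.single a c + MonoidAlgebra.single a c +
      MonoidAlgebra.single a c = (0 : MonoidAlgebra R G) := by
  rw [← MonoidAlgebra.single_add, ← MonoidAlgebra.single_add, ← MonoidAlgebra.single_add]
  have hc : c + c + c + c = 0 := by linear_combination c * h4
  rw [hc, MonoidAlgebra.single_zero]

lemma BB_anti (s : G) (hsc : ∀ x : G, s * x = x * s) (hs2 : s * s = 1)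
    (hcomm : ∀ g h : G, g * h = h * g ∨ g * h = s * (h * g))
    (h4 : (4 : R) = 0) (g h : G) (r r' : R) :
    (MonoidAlgebra.single g r - MonoidAlgebra.single (s * g) r) *
      (MonoidAlgebra.single h r' - MonoidAlgebra.single (s * h) r') +
    (MonoidAlgebra.single h r' - MonoidAlgebra.single (s * h) r') *
      (MonoidAlgebra.single g r - MonoidAlgebra.single (s * g) r) = 0 := by
  have hswap : ∀ x y : G, x * (s * y) = s * (x * y) := fun x y => by
    rw [← mul_assoc, ← hsc, mul_assoc]
  have hss : ∀ y : G, s * (s * y) = y := fun y => by rw [← mul_assoc, hs2, one_mul]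
  simp only [sub_mul, mul_sub, MonoidAlgebra.single_mul_single, mul_assoc, hswap, hss]
  rcases hcomm g h with hgh | hgh
  · have hhg : h * g = g * h := hgh.symm
    simp only [hhg]
    rw [mul_comm r' r]
    linear_combination (norm := abel)
      four_single h4 (g * h) (r * r') - four_single h4 (s * (g * h)) (r * r')
  · have hhg : h * g = s * (g * h) := by rw [hgh, hss]
    simp only [hhg, hss]
    rw [mul_comm r' r]
    abel

lemma BC_anti (s : G) (hsc : ∀ x : G, s * x = x * s) (hs2 : s * s = 1)
    (g h : G) (r r' : R) :
    (MonoidAlgebra.single g r - MonoidAlgebra.single (s * g) r) *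
      (MonoidAlgebra.single h r' + MonoidAlgebra.single (s * h) r') +
    (MonoidAlgebra.single h r' + MonoidAlgebra.single (s * h) r') *
      (MonoidAlgebra.single g r - MonoidAlgebra.single (s * g) r) = 0 := by
  have hswap : ∀ x y : G, x * (s * y) = s * (x * y) := fun x y => by
    rw [← mul_assoc, ← hsc, mul_assoc]
  have hss : ∀ y : G, s * (s * y) = y := fun y => by rw [← mul_assoc, hs2, one_mul]
  simp only [sub_mul, mul_sub, add_mul, mul_add, MonoidAlgebra.single_mul_single,
    mul_assoc, hswap, hss]
  abel

lemma CC_anti (s : G) (hsc : ∀ x : G, s * x = x * s) (hs2 : s * s = 1)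
    (hcomm : ∀ g h : G, g * h = h * g ∨ g * h = s * (h * g))
    (h4 : (4 : R) = 0) (g h : G) (r r' : R) :
    (MonoidAlgebra.single g r + MonoidAlgebra.single (s * g) r) *
      (MonoidAlgebra.single h r' + MonoidAlgebra.single (s * h) r') +
    (MonoidAlgebra.single h r' + MonoidAlgebra.single (s * h) r') *
      (MonoidAlgebra.single g r + MonoidAlgebra.single (s * g) r) = 0 := by
  have hswap : ∀ x y : G, x * (s * y) = s * (x * y) := fun x y => by
    rw [← mul_assoc, ← hsc, mul_assoc]
  have hss : ∀ y : G, s * (s * y) = y := fun y => by rw [← mul_assoc, hs2, one_mul]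
  simp only [add_mul, mul_add, MonoidAlgebra.single_mul_single, mul_assoc, hswap, hss]
  rcases hcomm g h with hgh | hgh
  · have hhg : h * g = g * h := hgh.symm
    simp only [hhg]
    rw [mul_comm r' r]
    linear_combination (norm := abel)
      four_single h4 (g * h) (r * r') + four_single h4 (s * (g * h)) (r * r')
  · have hhg : h * g = s * (g * h) := by rw [hgh, hss]
    simp only [hhg, hss]
    rw [mul_comm r' r]
    linear_combination (norm := abel)
      four_single h4 (g * h) (r * r') + four_single h4 (s * (g * h)) (r * r')


def IsGenSk (s : G) (γ : MonoidAlgebra R G) : Prop :=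
  (∃ z r, z ∈ Subgroup.center G ∧ r + r = 0 ∧ γ = MonoidAlgebra.single z r) ∨
  (∃ g r, γ = MonoidAlgebra.single g r - MonoidAlgebra.single (s * g) r) ∨
  (∃ g r, γ = MonoidAlgebra.single g r + MonoidAlgebra.single (s * g) r)

lemma central_comm (z : G) (hz : z ∈ Subgroup.center G) (r : R) (δ : MonoidAlgebra R G) :
    MonoidAlgebra.single z r * δ = δ * MonoidAlgebra.single z r := by
  have hz' : ∀ x : G, z⁻¹ * x = x * z⁻¹ := fun x =>
    ((Subgroup.mem_center_iff.mp (inv_mem hz)) x).symm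
  ext y
  rw [MonoidAlgebra.coeff_single_mul_apply, MonoidAlgebra.coeff_mul_single_apply, hz', mul_comm]

lemma A_any (z : G) (hz : z ∈ Subgroup.center G) (r : R) (hr : r + r = 0)
    (δ : MonoidAlgebra R G) :
    MonoidAlgebra.single z r * δ + δ * MonoidAlgebra.single z r = 0 := by
  rw [← central_comm z hz, ← add_mul, ← MonoidAlgebra.single_add, hr, MonoidAlgebra.single_zero, zero_mul]

section
variable (s : G) (hsc : ∀ x : G, s * x = x * s) (hs2 : s * s = 1)
    (hcomm : ∀ g h : G, g * h = h * g ∨ g * h = s * (h * g)) (h4 : (4 : R) = 0)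

lemma BB_anti' : True := trivial
end

lemma gen_anti (s : G) (hsc : ∀ x : G, s * x = x * s) (hs2 : s * s = 1)
    (hcomm : ∀ g h : G, g * h = h * g ∨ g * h = s * (h * g)) (h4 : (4 : R) = 0)
    {γ δ : MonoidAlgebra R G} (hγ : IsGenSk s γ) (hδ : IsGenSk s δ) :
    γ * δ + δ * γ = 0 := by
  rcases hγ with ⟨z, r, hz, hr, rfl⟩ | ⟨g, r, rfl⟩ | ⟨g, r, rfl⟩
  · exact A_any z hz r hr δ
  · rcases hδ with ⟨z, r', hz, hr', rfl⟩ | ⟨h, r', rfl⟩ | ⟨h, r', rfl⟩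
    · rw [add_comm]; exact A_any z hz r' hr' _
    · exact BB_anti s hsc hs2 hcomm h4 g h r r'
    · exact BC_anti s hsc hs2 g h r r'
  · rcases hδ with ⟨z, r', hz, hr', rfl⟩ | ⟨h, r', rfl⟩ | ⟨h, r', rfl⟩
    · rw [add_comm]; exact A_any z hz r' hr' _
    · rw [add_comm]; exact BC_anti s hsc hs2 h g r' r
    · exact CC_anti s hsc hs2 hcomm h4 g h r r'

lemma gen_sum_anti (s : G) (hsc : ∀ x : G, s * x = x * s) (hs2 : s * s = 1)
    (hcomm : ∀ g h : G, g * h = h * g ∨ g * h = s * (h * g)) (h4 : (4 : R) = 0)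
    {γ : MonoidAlgebra R G} (hγ : IsGenSk s γ) (l : List (MonoidAlgebra R G))
    (hl : ∀ δ ∈ l, IsGenSk s δ) : γ * l.sum + l.sum * γ = 0 := by
  induction l with
  | nil => simp
  | cons δ t ih =>
    rw [List.sum_cons, mul_add, add_mul]
    have h1 := gen_anti s hsc hs2 hcomm h4 hγ (hl δ (by simp))
    have h2 := ih (fun x hx => hl x (by simp [hx]))
    linear_combination (norm := abel) h1 + h2

lemma sum_sum_anti (s : G) (hsc : ∀ x : G, s * x = x * s) (hs2 : s * s = 1)
    (hcomm : ∀ g h : G, g * h = h * g ∨ g * h = s * (h * g)) (h4 : (4 : R) = 0)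
    (l₁ l₂ : List (MonoidAlgebra R G))
    (h1 : ∀ δ ∈ l₁, IsGenSk s δ) (h2 : ∀ δ ∈ l₂, IsGenSk s δ) :
    l₁.sum * l₂.sum + l₂.sum * l₁.sum = 0 := by
  induction l₁ with
  | nil => simp
  | cons γ t ih =>
    rw [List.sum_cons, add_mul, mul_add]
    have ha := gen_sum_anti s hsc hs2 hcomm h4 (h1 γ (by simp)) l₂ h2
    have hb := ih (fun x hx => h1 x (by simp [hx]))
    linear_combination (norm := abel) ha + hb


lemma sub_support_subset [DecidableEq G] (α γ : MonoidAlgebra R G) (h : G)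
    (h1 : γ.coeff h = α.coeff h) (h2 : ∀ x, x ≠ h → γ.coeff x = 0 ∨ γ.coeff x = α.coeff x) :
    (α - γ).coeff.support ⊆ α.coeff.support.erase h := by
  intro x hx
  rw [Finsupp.mem_support_iff, MonoidAlgebra.coeff_sub, Finsupp.sub_apply] at hx
  rcases eq_or_ne x h with rfl | hxh
  · exact absurd (by rw [h1, sub_self]) hx
  refine Finset.mem_erase.mpr ⟨hxh, Finsupp.mem_support_iff.mpr ?_⟩
  rcases h2 x hxh with hz | hz
  · intro hax; exact hx (by rw [hax, hz, sub_zero])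
  · exact absurd (by rw [hz, sub_self]) hx

lemma decomp_skew (s : G) (hs1 : s ≠ 1) (hscen : s ∈ Subgroup.center G) (hs2 : s * s = 1)
    (st : G → G)
    (hstc : ∀ g : G, g ∈ Subgroup.center G → st g = g)
    (hstnc : ∀ g : G, g ∉ Subgroup.center G → st g = s * g)
    (σ : G →* ℤˣ) (hσs : σ s = 1)
    (hout : ∀ x : G, x ∉ σ.ker → st x ≠ x) :
    ∀ (n : ℕ) (α : MonoidAlgebra R G), α.coeff.support.card ≤ n →
      orientedSharp st σ α = -α →
      ∃ l : List (MonoidAlgebra R G), (∀ γ ∈ l, IsGenSk s γ) ∧ α = l.sum := by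
  classical
  have hssx : ∀ y : G, s * (s * y) = y := fun y => by rw [← mul_assoc, hs2, one_mul]
  have hstst : Function.Involutive st := by
    intro g
    by_cases hg : g ∈ Subgroup.center G
    · rw [hstc g hg, hstc g hg]
    · have hsg : s * g ∉ Subgroup.center G := fun hc => by
        have h1 : s⁻¹ * (s * g) = g := by group
        exact hg (h1 ▸ mul_mem (inv_mem hscen) hc)
      rw [hstnc g hg, hstnc _ hsg, hssx]
  have hker : ∀ x : G, x ∈ Subgroup.center G → σ x = 1 := by
    intro x hx
    by_contra hne
    exact hout x (fun hk => hne (MonoidHom.mem_ker.mp hk)) (hstc x hx)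
  have hσst : ∀ x : G, σ (st x) = σ x := by
    intro x
    by_cases hx : x ∈ Subgroup.center G
    · rw [hstc x hx]
    · rw [hstnc x hx, map_mul, hσs, one_mul]
  intro n
  induction n with
  | zero =>
    intro α hcard _
    have h0 : α = 0 := by
      rw [← MonoidAlgebra.coeff_eq_zero, ← Finsupp.support_eq_empty]
      exact Finset.card_eq_zero.mp (Nat.le_antisymm hcard (Nat.zero_le _))
    exact ⟨[], by simp, by simp [h0]⟩
  | succ n ih =>
    intro α hcard hα
    by_cases h0 : α = 0
    · exact ⟨[], by simp, by simp [h0]⟩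
    obtain ⟨h, hh⟩ := Finsupp.support_nonempty_iff.mpr (MonoidAlgebra.coeff_eq_zero.not.mpr h0)
    have hco : ∀ x : G, ((σ x : ℤ) : R) * α.coeff (st x) = -(α.coeff x) := by
      intro x
      have hcx : (orientedSharp st σ α).coeff x = (-α).coeff x := by rw [hα]
      rw [sharp_apply st hstst σ α x, hσst] at hcx
      rw [hcx, MonoidAlgebra.coeff_neg, Finsupp.neg_apply]
    have hsh_ne : s * h ≠ h := fun e => hs1 (mul_right_cancel (e.trans (one_mul h).symm))
    have main : ∃ γ : MonoidAlgebra R G, IsGenSk s γ ∧ orientedSharp st σ γ = -γ ∧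
        (α - γ).coeff.support ⊆ α.coeff.support.erase h := by
      by_cases hc : h ∈ Subgroup.center G
      · -- central case
        have hσh : σ h = 1 := hker h hc
        have hsth : st h = h := hstc h hc
        have h2 : α.coeff h = -(α.coeff h) := by
          have hx := hco h; rw [hsth, hσh] at hx; simpa using hx
        have hrr : α.coeff h + α.coeff h = 0 := by linear_combination h2
        refine ⟨MonoidAlgebra.single h (α.coeff h), Or.inl ⟨h, α.coeff h, hc, hrr, rfl⟩, ?_, ?_⟩
        · rw [sharp_single, hsth, hσh]
          simp only [Units.val_one, Int.cast_one, one_mul]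
          exact eq_neg_of_add_eq_zero_left
            (by rw [← MonoidAlgebra.single_add, hrr, MonoidAlgebra.single_zero])
        · apply sub_support_subset
          · exact Finsupp.single_eq_same
          · intro x hxh
            exact Or.inl (Finsupp.single_eq_of_ne' (Ne.symm hxh))
      · -- noncentral case
        have hsth : st h = s * h := hstnc h hc
        have hshnc : s * h ∉ Subgroup.center G := fun hcc => hc (by
          have h1 : s⁻¹ * (s * h) = h := by group
          exact h1 ▸ mul_mem (inv_mem hscen) hcc)
        have hstsh : st (s * h) = h := by rw [hstnc _ hshnc, hssx]
        have hσsh : σ (s * h) = σ h := by rw [map_mul, hσs, one_mul]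
        have hne_h_sh : h ≠ s * h := Ne.symm hsh_ne
        rcases Int.units_eq_one_or (σ h) with hσh | hσh
        · -- type B
          have hrel : α.coeff (s * h) = -(α.coeff h) := by
            have hx := hco h; rw [hsth, hσh] at hx; simpa using hx
          refine ⟨MonoidAlgebra.single h (α.coeff h) - MonoidAlgebra.single (s * h) (α.coeff h),
            Or.inr (Or.inl ⟨h, α.coeff h, rfl⟩), ?_, ?_⟩
          · rw [sharp_sub, sharp_single, sharp_single, hsth, hstsh, hσsh, hσh]
            simp only [Units.val_one, Int.cast_one, one_mul]
            rw [neg_sub]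
          · apply sub_support_subset
            · rw [MonoidAlgebra.coeff_sub, Finsupp.sub_apply, MonoidAlgebra.coeff_single, MonoidAlgebra.coeff_single, Finsupp.single_eq_same,
                Finsupp.single_eq_of_ne' hsh_ne, sub_zero]
            · intro x hxh
              rcases eq_or_ne x (s * h) with rfl | hxsh
              · right
                rw [MonoidAlgebra.coeff_sub, Finsupp.sub_apply, MonoidAlgebra.coeff_single, MonoidAlgebra.coeff_single, Finsupp.single_eq_of_ne' hne_h_sh,
                  Finsupp.single_eq_same, zero_sub, hrel]
              · left
                rw [MonoidAlgebra.coeff_sub, Finsupp.sub_apply, MonoidAlgebra.coeff_single, MonoidAlgebra.coeff_single, Finsupp.single_eq_of_ne' (Ne.symm hxh),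
                  Finsupp.single_eq_of_ne' (Ne.symm hxsh), sub_zero]
        · -- type C
          have hrel : α.coeff (s * h) = α.coeff h := by
            have hx := hco h; rw [hsth, hσh] at hx
            simpa using hx
          refine ⟨MonoidAlgebra.single h (α.coeff h) + MonoidAlgebra.single (s * h) (α.coeff h),
            Or.inr (Or.inr ⟨h, α.coeff h, rfl⟩), ?_, ?_⟩
          · rw [sharp_add, sharp_single, sharp_single, hsth, hstsh, hσsh, hσh]
            simp only [Units.val_neg, Units.val_one, Int.cast_neg, Int.cast_one,
              neg_mul, one_mul]
            apply eq_neg_of_add_eq_zero_left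
            have k1 : (MonoidAlgebra.single (s * h) (-α.coeff h) +
                MonoidAlgebra.single (s * h) (α.coeff h) : MonoidAlgebra R G) = 0 := by
              rw [← MonoidAlgebra.single_add, neg_add_cancel, MonoidAlgebra.single_zero]
            have k2 : (MonoidAlgebra.single h (-α.coeff h) +
                MonoidAlgebra.single h (α.coeff h) : MonoidAlgebra R G) = 0 := by
              rw [← MonoidAlgebra.single_add, neg_add_cancel, MonoidAlgebra.single_zero]
            linear_combination (norm := abel) k1 + k2
          · apply sub_support_subset
            · rw [MonoidAlgebra.coeff_add, Finsupp.add_apply, MonoidAlgebra.coeff_single, MonoidAlgebra.coeff_single, Finsupp.single_eq_same,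
                Finsupp.single_eq_of_ne' hsh_ne, add_zero]
            · intro x hxh
              rcases eq_or_ne x (s * h) with rfl | hxsh
              · right
                rw [MonoidAlgebra.coeff_add, Finsupp.add_apply, MonoidAlgebra.coeff_single, MonoidAlgebra.coeff_single, Finsupp.single_eq_of_ne' hne_h_sh,
                  Finsupp.single_eq_same, zero_add, hrel]
              · left
                rw [MonoidAlgebra.coeff_add, Finsupp.add_apply, MonoidAlgebra.coeff_single, MonoidAlgebra.coeff_single, Finsupp.single_eq_of_ne' (Ne.symm hxh),
                  Finsupp.single_eq_of_ne' (Ne.symm hxsh), add_zero]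
    obtain ⟨γ, hgen, hskewγ, hsub⟩ := main
    have hcard' : (α - γ).coeff.support.card ≤ n := by
      have := Finset.card_le_card hsub
      rw [Finset.card_erase_of_mem hh] at this
      omega
    have hskew' : orientedSharp st σ (α - γ) = -(α - γ) := by
      rw [sharp_sub, hα, hskewγ]; abel
    obtain ⟨l, hl, hsum⟩ := ih (α - γ) hcard' hskew'
    refine ⟨γ :: l, ?_, ?_⟩
    · intro x hx
      rcases List.mem_cons.mp hx with rfl | hx
      · exact hgen
      · exact hl x hx
    · rw [List.sum_cons, ← hsum]; abel

end SkewAux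

open scoped commutatorElement

/-- if `char R = 4`, `G` is SLC with unique nonidentity
commutator `s`, `*` is the canonical involution, and `x* ≠ x` for every
`x` outside the index-2 subgroup `N = ker σ`, then the skew-symmetric
elements of `RG` anticommute. -/
theorem skew_anticommute_slc_case {R : Type*} [CommRing R] {G : Type*} [Group G]
    (hchar : ringChar R = 4)
    (s : G) (hs1 : s ≠ 1)
    (hex : ∃ g h : G, ⁅g, h⁆ = s)
    (huniq : ∀ g h : G, ⁅g, h⁆ = 1 ∨ ⁅g, h⁆ = s)
    (hLC : ∀ g h : G, g * h = h * g →
      g ∈ Subgroup.center G ∨ h ∈ Subgroup.center G ∨ g * h ∈ Subgroup.center G)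
    (st : G → G)
    (hstc : ∀ g : G, g ∈ Subgroup.center G → st g = g)
    (hstnc : ∀ g : G, g ∉ Subgroup.center G → st g = s * g)
    (σ : G →* ℤˣ) (hidx : σ.ker.index = 2)
    (hout : ∀ x : G, x ∉ σ.ker → st x ≠ x) :
    ∀ α β : MonoidAlgebra R G,
      orientedSharp st σ α = -α → orientedSharp st σ β = -β → α * β = -(β * α) := by
  classical
  have hs2 : s * s = 1 := by
    obtain ⟨g₀, h₀, hgh₀⟩ := hex
    rcases huniq h₀ g₀ with hc1 | hcs
    · exact absurd (inv_eq_one.mp (by rw [← hgh₀, commutatorElement_inv, hc1])) hs1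
    · exact mul_eq_one_iff_inv_eq.mpr (by rw [← hgh₀, commutatorElement_inv, hcs, hgh₀])
  have hscen : s ∈ Subgroup.center G := by
    rw [Subgroup.mem_center_iff]
    intro x
    rcases huniq s x with hc1 | hcs
    · exact (commutatorElement_eq_one_iff_mul_comm.mp hc1).symm
    · exfalso
      rw [commutatorElement_def] at hcs
      have h2 : s * (x * s⁻¹ * x⁻¹) = s * 1 := by
        rw [mul_one]
        conv_rhs => rw [← hcs]
        group
      have h3 := mul_left_cancel h2
      have hinv : s⁻¹ = 1 := by
        have he : s⁻¹ = x⁻¹ * (x * s⁻¹ * x⁻¹) * x := by group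
        rw [he, h3]; group
      exact hs1 (inv_eq_one.mp hinv)
  have hsc : ∀ x : G, s * x = x * s := fun x => (Subgroup.mem_center_iff.mp hscen x).symm
  have hcomm : ∀ g h : G, g * h = h * g ∨ g * h = s * (h * g) := by
    intro g h
    rcases huniq g h with hc1 | hcs
    · exact Or.inl (commutatorElement_eq_one_iff_mul_comm.mp hc1)
    · right
      rw [commutatorElement_def] at hcs
      rw [← hcs]; group
  have h4 : (4 : R) = 0 := by
    have hc := ringChar.Nat.cast_ringChar (R := R)
    rw [hchar] at hc
    exact_mod_cast hc
  have hσs : σ s = 1 := by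
    by_contra hne
    exact hout s (fun hk => hne (MonoidHom.mem_ker.mp hk)) (hstc s hscen)
  intro α β hα hβ
  obtain ⟨l₁, hl₁, hsum₁⟩ := decomp_skew s hs1 hscen hs2 st hstc hstnc σ hσs hout
    α.coeff.support.card α le_rfl hα
  obtain ⟨l₂, hl₂, hsum₂⟩ := decomp_skew s hs1 hscen hs2 st hstc hstnc σ hσs hout
    β.coeff.support.card β le_rfl hβ
  have key := sum_sum_anti s hsc hs2 hcomm h4 l₁ l₂ hl₁ hl₂
  rw [hsum₁, hsum₂]
  exact eq_neg_of_add_eq_zero_left key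
end

section
/- In RG with char R = 4 and G SLC with commutator s and canonical involution *, for n, m ∈ N with n* = sn and m* = sm, the elements (1−s)n and (1−s)m anticommute: (1−s)n·(1−s)m = −(1−s)m·(1−s)n. -/
/-!
Put `e = 1 - s`. Since `s` is central, `e` commutes with every group element, and `s² = 1` gives
`e² = 2e`, so `(e n)(e m) = 2e·nm` and `(e m)(e n) = 2e·mn`. If `n` and `m` commute, the two
differ by a sign because `4 = 0`; otherwise `nm = s·mn` and `e s = -e`.
-/

section Involution

variable {A : Type*} [Ring A] {a : A}

theorem one_sub_mul_one_sub_of_mul_self_eq_one (ha : a * a = 1) :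
    (1 - a) * (1 - a) = 2 * (1 - a) := by
  calc (1 - a) * (1 - a) = 1 - 2 * a + a * a := by noncomm_ring
    _ = 2 * (1 - a) := by rw [ha]; noncomm_ring

theorem one_sub_mul_of_mul_self_eq_one (ha : a * a = 1) : (1 - a) * a = -(1 - a) := by
  rw [sub_mul, one_mul, ha, neg_sub]

theorem one_sub_mul_anticomm_of_four_eq_zero (h4 : (4 : A) = 0) (ha : a * a = 1) {u v : A}
    (hu : Commute u a) (hv : Commute v a) (huv : u * v = v * u ∨ u * v = a * (v * u)) :
    (1 - a) * u * ((1 - a) * v) = -((1 - a) * v * ((1 - a) * u)) := by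
  have hsq (w z : A) (hw : Commute w a) :
      (1 - a) * w * ((1 - a) * z) = 2 * (1 - a) * (w * z) := by
    rw [((Commute.one_right w).sub_right hw).mul_mul_mul_comm,
      one_sub_mul_one_sub_of_mul_self_eq_one ha]
  rw [hsq u v hu, hsq v u hv]
  rcases huv with huv | huv
  · rw [huv, eq_neg_iff_add_eq_zero]
    calc _ = (4 : A) * ((1 - a) * (v * u)) := by noncomm_ring
      _ = 0 := by rw [h4, zero_mul]
  · rw [huv, ← mul_assoc, mul_assoc 2, one_sub_mul_of_mul_self_eq_one ha, mul_neg, neg_mul]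

end Involution

theorem natCast_eq_zero_of_ringChar_eq {R A : Type*} [CommRing R] [Ring A] [Algebra R A]
    {p : ℕ} (hchar : ringChar R = p) : (p : A) = 0 := by
  have := ringChar.eq_iff.mp hchar
  rw [← map_natCast (algebraMap R A), CharP.cast_eq_zero, map_zero]

theorem one_sub_s_elements_anticommute_general {R : Type*} [CommRing R] {G : Type*} [Group G]
    (hchar : ringChar R = 4)
    (s : G) (hsc : s ∈ Subgroup.center G) (hs2 : s ^ 2 = 1)
    (hcomm : ∀ g h : G, g * h = h * g ∨ g * h = s * (h * g))
    (n m : G) :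
    ((1 - MonoidAlgebra.single s (1 : R)) * MonoidAlgebra.single n (1 : R)) *
        ((1 - MonoidAlgebra.single s (1 : R)) * MonoidAlgebra.single m (1 : R)) =
      -(((1 - MonoidAlgebra.single s (1 : R)) * MonoidAlgebra.single m (1 : R)) *
        ((1 - MonoidAlgebra.single s (1 : R)) * MonoidAlgebra.single n (1 : R))) := by
  simp only [← MonoidAlgebra.of_apply]
  have h4 : (4 : MonoidAlgebra R G) = 0 := by exact_mod_cast natCast_eq_zero_of_ringChar_eq hchar
  have hs_central (g : G) : Commute (MonoidAlgebra.of R G g) (MonoidAlgebra.of R G s) :=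
    (MonoidAlgebra.of_commute (fun g ↦ (Subgroup.mem_center_iff.mp hsc g).symm) _).symm
  refine one_sub_mul_anticomm_of_four_eq_zero h4 ?_ (hs_central n) (hs_central m) ?_
  · rw [← map_mul, ← sq, hs2, map_one]
  · simpa only [← map_mul] using (hcomm n m).imp (congrArg _) (congrArg _)

/-- in `RG` with `char R = 4` and `G` SLC with commutator `s`
and canonical involution `*`, for `n, m ∈ N` with `n* = sn`, `m* = sm`, the
elements `(1−s)n` and `(1−s)m` anticommute. -/
theorem one_sub_s_elements_anticommute {R : Type*} [CommRing R] {G : Type*} [Group G]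
    (hchar : ringChar R = 4)
    (s : G) (hs1 : s ≠ 1) (hsc : s ∈ Subgroup.center G) (hs2 : s ^ 2 = 1)
    (hcomm : ∀ g h : G, g * h = h * g ∨ g * h = s * (h * g))
    (st : G → G)
    (hstc : ∀ g : G, g ∈ Subgroup.center G → st g = g)
    (hstnc : ∀ g : G, g ∉ Subgroup.center G → st g = s * g)
    (σ : G →* ℤˣ) (hidx : σ.ker.index = 2)
    (n m : G) (hn : n ∈ σ.ker) (hm : m ∈ σ.ker)
    (hstn : st n = s * n) (hstm : st m = s * m) :
    ((1 - MonoidAlgebra.single s (1 : R)) * MonoidAlgebra.single n (1 : R)) *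
        ((1 - MonoidAlgebra.single s (1 : R)) * MonoidAlgebra.single m (1 : R)) =
      -(((1 - MonoidAlgebra.single s (1 : R)) * MonoidAlgebra.single m (1 : R)) *
        ((1 - MonoidAlgebra.single s (1 : R)) * MonoidAlgebra.single n (1 : R))) :=
  one_sub_s_elements_anticommute_general hchar s hsc hs2 hcomm n m
end

section
/- Suppose R₂² = {0} where R₂ = {r ∈ R : 2r = 0}, N is an abelian index-2 subgroup of G, x* = x for all x ∈ G \ N, and n* = a⁻¹na for all n ∈ N and any fixed a ∈ G \ N. Then the map * so defined is a well-defined involution (anti-automorphism of order 2) on G. -/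
open scoped Classical in
/-- The map fixing everything outside `N` and conjugating `N` by `a`. -/
noncomputable def conjInvolution {G : Type*} [Group G] (N : Subgroup G) (a : G) (g : G) : G :=
  if g ∈ N then a⁻¹ * g * a else g

private lemma conj_mem_aux {G : Type*} [Group G] {N : Subgroup G} (hidx : N.index = 2)
    {b n : G} (hb : b ∉ N) (hn : n ∈ N) : b⁻¹ * n * b ∈ N := by
  have hbi : b⁻¹ ∉ N := fun h => hb (by simpa using N.inv_mem h)
  have h1 : b⁻¹ * n ∉ N := by
    rw [Subgroup.mul_mem_iff_of_index_two hidx]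
    simp [hbi, hn]
  rw [Subgroup.mul_mem_iff_of_index_two hidx]
  simp [h1, hb]

/-- with `R₂² = {0}`, `N` an abelian index-2 subgroup and
`a ∉ N`, the map `x* = x` for `x ∉ N`, `n* = a⁻¹na` for `n ∈ N` is a
well-defined involution (anti-automorphism of order 2) on `G`. -/
theorem conj_involution_well_defined {R : Type*} [CommRing R] {G : Type*} [Group G]
    (hR2 : ∀ r r' : R, 2 * r = 0 → 2 * r' = 0 → r * r' = 0)
    (N : Subgroup G) (hidx : N.index = 2)
    (hab : ∀ n ∈ N, ∀ m ∈ N, n * m = m * n)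
    (a : G) (ha : a ∉ N) :
    (∀ b : G, b ∉ N → ∀ n ∈ N, b⁻¹ * n * b = a⁻¹ * n * a) ∧
    (∀ g h : G, conjInvolution N a (g * h) = conjInvolution N a h * conjInvolution N a g) ∧
    (∀ g : G, conjInvolution N a (conjInvolution N a g) = g) := by
  have hai : a⁻¹ ∉ N := fun h => ha (by simpa using N.inv_mem h)
  -- part 1
  have key : ∀ b : G, b ∉ N → ∀ n ∈ N, b⁻¹ * n * b = a⁻¹ * n * a := by
    intro b hb n hn
    have hm : a⁻¹ * b ∈ N := by
      rw [Subgroup.mul_mem_iff_of_index_two hidx]; simp [hai, hb]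
    have hc : a⁻¹ * n * a ∈ N := conj_mem_aux hidx ha hn
    have hcomm := hab _ hc _ hm
    calc b⁻¹ * n * b = (a⁻¹ * b)⁻¹ * (a⁻¹ * n * a) * (a⁻¹ * b) := by
          group
      _ = (a⁻¹ * b)⁻¹ * ((a⁻¹ * n * a) * (a⁻¹ * b)) := by group
      _ = (a⁻¹ * b)⁻¹ * ((a⁻¹ * b) * (a⁻¹ * n * a)) := by rw [hcomm]
      _ = a⁻¹ * n * a := by group
  -- useful: for n ∈ N, a * n * a⁻¹ = a⁻¹ * n * a (since a² ∈ N commutes with n)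
  have key' : ∀ n ∈ N, a * n * a⁻¹ = a⁻¹ * n * a := by
    intro n hn
    have := key a⁻¹ hai n hn
    simpa using this
  refine ⟨key, ?_, ?_⟩
  · intro g h
    unfold conjInvolution
    by_cases hg : g ∈ N <;> by_cases hh : h ∈ N
    · have hgh : g * h ∈ N := N.mul_mem hg hh
      simp only [hgh, hg, hh, if_true]
      rw [show g * h = h * g from hab g hg h hh]
      group
    · have hgh : g * h ∉ N := by
        rw [Subgroup.mul_mem_iff_of_index_two hidx]; simp [hg, hh]
      simp only [hgh, hg, hh, if_true, if_false]
      have := key h hh g hg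
      calc g * h = h * (h⁻¹ * g * h) := by group
        _ = h * (a⁻¹ * g * a) := by rw [this]
    · have hgh : g * h ∉ N := by
        rw [Subgroup.mul_mem_iff_of_index_two hidx]; simp [hg, hh]
      simp only [hgh, hg, hh, if_true, if_false]
      have hgi : g⁻¹ ∉ N := fun h' => hg (by simpa using N.inv_mem h')
      have := key g⁻¹ hgi h hh
      calc g * h = (g * h * g⁻¹) * g := by group
        _ = (a⁻¹ * h * a) * g := by rw [← this]; group
    · have hgh : g * h ∈ N := by
        rw [Subgroup.mul_mem_iff_of_index_two hidx]; simp [hg, hh]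
      have hhg : h * g ∈ N := by
        rw [Subgroup.mul_mem_iff_of_index_two hidx]; simp [hg, hh]
      simp only [hgh, hg, hh, if_true, if_false]
      have h1 := key h hh (h * g) hhg
      have h2 := key' (h * g) hhg
      calc a⁻¹ * (g * h) * a = a⁻¹ * (h⁻¹ * (h * g) * h) * a := by group
        _ = a⁻¹ * (a⁻¹ * (h * g) * a) * a := by rw [h1]
        _ = a⁻¹ * (a * (h * g) * a⁻¹) * a := by rw [h2]
        _ = h * g := by group
  · intro g
    unfold conjInvolution
    by_cases hg : g ∈ N
    · have hc : a⁻¹ * g * a ∈ N := conj_mem_aux hidx ha hg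
      simp only [hg, hc, if_true]
      rw [← key' g hg]
      group
    · simp [hg]
end

section
/- Suppose R₂² = {0} (where R₂ = {r ∈ R : 2r = 0}), G has an abelian index-2 subgroup N, σ : G → {±1} has kernel N, x* = x for x ∉ N, and n* = a⁻¹na for n ∈ N, a ∉ N. Then the symmetric elements (RG)⁺ = {α : α♯ = α} under the oriented involution ♯ form a commutative set. -/
namespace MonoidAlgebra

variable {R G : Type*}

theorem mul_eq_zero_of_coeff_mul_coeff_eq_zero [Semiring R] [Mul G] {x y : MonoidAlgebra R G}
    (h : ∀ g g', x.coeff g * y.coeff g' = 0) : x * y = 0 := by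
  simp [mul_def, Finsupp.sum, h]

theorem commute_of_coeff_conj_eq [CommSemiring R] [Group G] {x : MonoidAlgebra R G}
    (h : ∀ g k, x.coeff (g⁻¹ * k * g) = x.coeff k) (y : MonoidAlgebra R G) : Commute x y := by
  induction y using MonoidAlgebra.induction with
  | zero => exact Commute.zero_right x
  | single_add g r y _ _ ih =>
    refine Commute.add_right ?_ ih
    ext k
    rw [coeff_mul_single_apply, coeff_single_mul_apply, mul_comm, ← h g (k * g⁻¹)]
    simp [mul_assoc]

theorem ofCoeff_filter_add_ofCoeff_filter_not [Semiring R] (x : MonoidAlgebra R G)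
    (p : G → Prop) [DecidablePred p] :
    ofCoeff (x.coeff.filter p) + ofCoeff (x.coeff.filter (¬ p ·)) = x := by
  rw [← ofCoeff_add, Finsupp.filter_add_filter_not]

end MonoidAlgebra

theorem MonoidHom.inv_mul_mul_mem_ker_iff {G A : Type*} [Group G] [CommGroup A] (f : G →* A)
    (g k : G) : g⁻¹ * k * g ∈ f.ker ↔ k ∈ f.ker := by
  simp [MonoidHom.mem_ker, mul_right_comm]

open MonoidAlgebra

section OrientedSharp

variable {R G : Type*} [CommRing R] [Group G] {σ : G →* ℤˣ} {st : G → G}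

theorem injective_of_eq_conj_on_ker {a : G} (hout : ∀ x, x ∉ σ.ker → st x = x)
    (hin : ∀ n ∈ σ.ker, st n = a⁻¹ * n * a) : st.Injective := by
  have hst_ker : ∀ x, st x ∈ σ.ker ↔ x ∈ σ.ker := by
    intro x
    by_cases hx : x ∈ σ.ker
    · simp [hin x hx, σ.inv_mul_mul_mem_ker_iff, hx]
    · simp [hout x hx, hx]
  intro x y hxy
  by_cases hx : x ∈ σ.ker
  · have hy : y ∈ σ.ker := (hst_ker y).mp (hxy ▸ (hst_ker x).mpr hx)
    rw [hin x hx, hin y hy] at hxy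
    exact mul_left_cancel (mul_right_cancel hxy)
  · have hy : y ∉ σ.ker := fun hy => hx ((hst_ker x).mp (hxy ▸ (hst_ker y).mpr hy))
    rwa [hout x hx, hout y hy] at hxy

theorem coeff_orientedSharp_apply (hst : st.Injective) (x : MonoidAlgebra R G) (g : G) :
    (orientedSharp st σ x).coeff (st g) = ((σ g : ℤ) : R) * x.coeff g := by
  classical
  rw [orientedSharp, coeff_finsuppSum, Finsupp.sum_apply, Finsupp.sum_eq_single g]
  · simp
  · intro h _ hhg
    simp [hst.ne hhg]
  · simp

theorem coeff_apply_eq_of_orientedSharp_eq (hst : st.Injective) {x : MonoidAlgebra R G}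
    (hx : orientedSharp st σ x = x) (g : G) : x.coeff (st g) = ((σ g : ℤ) : R) * x.coeff g := by
  rw [← coeff_orientedSharp_apply hst, hx]

theorem two_mul_coeff_eq_zero_of_orientedSharp_eq (hst : st.Injective)
    (hout : ∀ x, x ∉ σ.ker → st x = x) {x : MonoidAlgebra R G}
    (hx : orientedSharp st σ x = x) {g : G} (hg : g ∉ σ.ker) : 2 * x.coeff g = 0 := by
  have h := coeff_apply_eq_of_orientedSharp_eq hst hx g
  rw [hout g hg, (Int.units_eq_one_or (σ g)).resolve_left hg] at h
  push_cast at h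
  linear_combination h

theorem coeff_conj_eq_of_orientedSharp_eq (hab : ∀ n ∈ σ.ker, ∀ m ∈ σ.ker, n * m = m * n)
    (hst : st.Injective) (hin : ∀ n ∈ σ.ker, ∀ a : G, a ∉ σ.ker → st n = a⁻¹ * n * a)
    {x : MonoidAlgebra R G} (hx : orientedSharp st σ x = x) {k : G} (hk : k ∈ σ.ker) (g : G) :
    x.coeff (g⁻¹ * k * g) = x.coeff k := by
  by_cases hg : g ∈ σ.ker
  · rw [mul_assoc, hab k hk g hg, inv_mul_cancel_left]
  · have h := coeff_apply_eq_of_orientedSharp_eq hst hx k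
    rwa [hin k hk g hg, MonoidHom.mem_ker.mp hk, Units.val_one, Int.cast_one, one_mul] at h

theorem commute_ofCoeff_filter_mem_ker [DecidablePred (· ∈ σ.ker)]
    (hab : ∀ n ∈ σ.ker, ∀ m ∈ σ.ker, n * m = m * n) (hst : st.Injective)
    (hin : ∀ n ∈ σ.ker, ∀ a : G, a ∉ σ.ker → st n = a⁻¹ * n * a)
    {x : MonoidAlgebra R G} (hx : orientedSharp st σ x = x) (y : MonoidAlgebra R G) :
    Commute (ofCoeff (x.coeff.filter (· ∈ σ.ker))) y := by
  refine commute_of_coeff_conj_eq (fun g k => ?_) y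
  simp only [Finsupp.filter_apply, σ.inv_mul_mul_mem_ker_iff]
  split_ifs with hk
  exacts [coeff_conj_eq_of_orientedSharp_eq hab hst hin hx hk g, rfl]

theorem ofCoeff_filter_not_mem_ker_mul_eq_zero [DecidablePred (· ∈ σ.ker)]
    (hR2 : ∀ r r' : R, 2 * r = 0 → 2 * r' = 0 → r * r' = 0) (hst : st.Injective)
    (hout : ∀ x, x ∉ σ.ker → st x = x) {x y : MonoidAlgebra R G}
    (hx : orientedSharp st σ x = x) (hy : orientedSharp st σ y = y) :
    ofCoeff (x.coeff.filter (· ∉ σ.ker)) * ofCoeff (y.coeff.filter (· ∉ σ.ker)) = 0 := by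
  refine mul_eq_zero_of_coeff_mul_coeff_eq_zero fun g g' => ?_
  by_cases hg : g ∈ σ.ker
  · rw [Finsupp.filter_apply_neg (· ∉ σ.ker) _ (not_not.mpr hg), zero_mul]
  by_cases hg' : g' ∈ σ.ker
  · rw [Finsupp.filter_apply_neg (· ∉ σ.ker) _ (not_not.mpr hg'), mul_zero]
  rw [Finsupp.filter_apply_pos (· ∉ σ.ker) _ hg, Finsupp.filter_apply_pos (· ∉ σ.ker) _ hg']
  exact hR2 _ _ (two_mul_coeff_eq_zero_of_orientedSharp_eq hst hout hx hg)
    (two_mul_coeff_eq_zero_of_orientedSharp_eq hst hout hy hg')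

end OrientedSharp

/-- if `R₂² = {0}`, `N = ker σ` is abelian of index 2,
`x* = x` for `x ∉ N` and `n* = a⁻¹na` for `n ∈ N`, `a ∉ N`, then
the symmetric elements of `RG` commute. -/
theorem symmetric_commute_case_one {R : Type*} [CommRing R] {G : Type*} [Group G]
    (hR2 : ∀ r r' : R, 2 * r = 0 → 2 * r' = 0 → r * r' = 0)
    (σ : G →* ℤˣ) (hidx : σ.ker.index = 2)
    (hab : ∀ n ∈ σ.ker, ∀ m ∈ σ.ker, n * m = m * n)
    (st : G → G)
    (hout : ∀ x : G, x ∉ σ.ker → st x = x)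
    (hin : ∀ n ∈ σ.ker, ∀ a : G, a ∉ σ.ker → st n = a⁻¹ * n * a) :
    ∀ α β : MonoidAlgebra R G,
      orientedSharp st σ α = α → orientedSharp st σ β = β → α * β = β * α := by
  classical
  obtain ⟨a, ha⟩ : ∃ a, a ∉ σ.ker := SetLike.exists_not_mem_of_ne_top _ fun h => by
    rw [h, Subgroup.index_top] at hidx
    omega
  have hst : st.Injective := injective_of_eq_conj_on_ker hout fun n hn => hin n hn a ha
  intro α β hα hβ
  have hνα := commute_ofCoeff_filter_mem_ker hab hst hin hα
  have hνβ := commute_ofCoeff_filter_mem_ker hab hst hin hβ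
  have hτ := ofCoeff_filter_not_mem_ker_mul_eq_zero hR2 hst hout hα hβ
  have hτ' := ofCoeff_filter_not_mem_ker_mul_eq_zero hR2 hst hout hβ hα
  rw [← ofCoeff_filter_add_ofCoeff_filter_not α (· ∈ σ.ker),
    ← ofCoeff_filter_add_ofCoeff_filter_not β (· ∈ σ.ker)]
  exact ((hνα _).add_right (hνα _)).add_left ((hνβ _).symm.add_right (hτ.trans hτ'.symm))
end

section
/- Suppose char R = 4 and both G and its index-2 subgroup N = ker σ are SLC groups with * the canonical involution on G. Then the symmetric elements (RG)⁺ under the oriented involution ♯ commute. -/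
open scoped commutatorElement in
/-- A group is SLC with (unique nonidentity) commutator `s` if `s ≠ 1` is its only
nonidentity commutator and it has the limited commutativity property. -/
def IsSLC (G : Type*) [Group G] (s : G) : Prop :=
  s ≠ 1 ∧ (∃ g h : G, ⁅g, h⁆ = s) ∧ (∀ g h : G, ⁅g, h⁆ = 1 ∨ ⁅g, h⁆ = s) ∧
    (∀ g h : G, g * h = h * g →
      g ∈ Subgroup.center G ∨ h ∈ Subgroup.center G ∨ g * h ∈ Subgroup.center G)

/-!
A `♯`-symmetric element is a sum of `♯`-symmetric elements each supported on a single orbit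
`{g, g*}` of the canonical involution, so it suffices that any two of these commute. This is clear
when their supports commute elementwise. Otherwise take non-commuting `a`, `b` in the supports:
both are noncentral, so the two elements are `r (a + σ(a) s a)` and `t (b + σ(b) s b)`, and as
`b a = s a b` with `s` central of order 2, their commutator is
`r t (1 - σ a) (1 - σ b) (a b - s a b)`, which vanishes because `(1 - σ a) (1 - σ b) ∈ {0, 4}`.
-/

open MonoidAlgebra

theorem Function.Involutive.forall_eq_or_eq_of_mem {α : Type*} {f : α → α}
    (hf : Function.Involutive f) {S : Set α} (hS : ∃ g, ∀ y ∈ S, y = g ∨ y = f g) {a : α}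
    (ha : a ∈ S) : ∀ y ∈ S, y = a ∨ y = f a := by
  obtain ⟨g, hg⟩ := hS
  rcases hg a ha with rfl | rfl
  · exact hg
  · intro y hy
    rw [hf g]
    exact (hg y hy).symm

section OrientedSharp

variable {R : Type*} [CommRing R] {G : Type*} [Group G] {st : G → G} {σ : G →* ℤˣ}

theorem orientedSharp_coeff (hst : Function.Involutive st) (α : MonoidAlgebra R G) (x : G) :
    (orientedSharp st σ α).coeff x = ((σ (st x) : ℤ) : R) * α.coeff (st x) := by
  classical
  simp only [orientedSharp, coeff_finsuppSum, Finsupp.sum_apply, coeff_single,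
    Finsupp.single_apply, hst.eq_iff]
  rw [Finsupp.sum_ite_eq']
  split_ifs with h
  · rfl
  · rw [Finsupp.notMem_support_iff.mp h, mul_zero]

theorem orientedSharp_ofCoeff_filter (hst : Function.Involutive st) (p : G → Prop)
    [DecidablePred p] (hp : ∀ x, p (st x) ↔ p x) (α : MonoidAlgebra R G) :
    orientedSharp st σ (ofCoeff (α.coeff.filter p)) =
      ofCoeff ((orientedSharp st σ α).coeff.filter p) := by
  ext x
  simp only [orientedSharp_coeff hst, Finsupp.filter_apply, hp]
  split_ifs <;> simp

variable (st σ) in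
def symmetricOrbitElements : Set (MonoidAlgebra R G) :=
  {x | orientedSharp st σ x = x ∧ ∃ g, ∀ y ∈ x.coeff.support, y = g ∨ y = st g}

theorem mem_span_symmetricOrbitElements (hst : Function.Involutive st) {α : MonoidAlgebra R G}
    (hα : orientedSharp st σ α = α) : α ∈ Submodule.span R (symmetricOrbitElements st σ) := by
  classical
  induction hn : α.coeff.support.card using Nat.strong_induction_on generalizing α with
  | _ n ih =>
  obtain hempty | ⟨g, hg⟩ := α.coeff.support.eq_empty_or_nonempty
  · rw [Finsupp.support_eq_empty, coeff_eq_zero] at hempty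
    exact hempty ▸ Submodule.zero_mem _
  set p : G → Prop := fun x => x = g ∨ x = st g
  have hp : ∀ x, p (st x) ↔ p x := fun x => by
    show (st x = g ∨ st x = st g) ↔ _
    rw [hst.eq_iff, hst.injective.eq_iff, or_comm]
  have hsplit : ofCoeff (α.coeff.filter p) + ofCoeff (α.coeff.filter (¬ p ·)) = α := by
    rw [← ofCoeff_add, Finsupp.filter_add_filter_not, ofCoeff_coeff]
  have hsym : ∀ q : G → Prop, [DecidablePred q] → (∀ x, q (st x) ↔ q x) →
      orientedSharp st σ (ofCoeff (α.coeff.filter q)) = ofCoeff (α.coeff.filter q) :=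
    fun q _ hq => by rw [orientedSharp_ofCoeff_filter hst q hq, hα]
  rw [← hsplit]
  refine Submodule.add_mem _ (Submodule.subset_span ⟨hsym p hp, g, ?_⟩)
    (ih _ ?_ (hsym _ fun x => (hp x).not) rfl)
  · intro x hx
    exact (Finset.mem_filter.mp hx).2
  · exact hn ▸ Finset.card_lt_card (Finset.filter_ssubset.mpr ⟨g, hg, not_not.mpr (.inl rfl)⟩)

theorem eq_single_add_single_of_orientedSharp_eq (hst : Function.Involutive st)
    {x : MonoidAlgebra R G} (hx : orientedSharp st σ x = x) {a : G} (ha : st a ≠ a)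
    (hsupp : ∀ y ∈ x.coeff.support, y = a ∨ y = st a) :
    x = single a (x.coeff a) + single (st a) (((σ a : ℤ) : R) * x.coeff a) := by
  classical
  have hsta : x.coeff (st a) = ((σ a : ℤ) : R) * x.coeff a := by
    rw [← hx, orientedSharp_coeff hst, hst a, hx]
  ext y
  simp only [coeff_add, coeff_single, Finsupp.add_apply, Finsupp.single_apply]
  by_cases hya : a = y
  · subst hya
    simp [ha]
  by_cases hyb : st a = y
  · subst hyb
    simp [hya, hsta]
  rw [if_neg hya, if_neg hyb, add_zero, ← Finsupp.notMem_support_iff]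
  exact fun hy => (hsupp y hy).elim (fun h => hya h.symm) (fun h => hyb h.symm)

end OrientedSharp

section Commute

variable {R : Type*} [CommRing R] {M : Type*} [Monoid M]

theorem MonoidAlgebra.commute_of_forall_mem_support {x y : MonoidAlgebra R M}
    (h : ∀ a ∈ x.coeff.support, ∀ b ∈ y.coeff.support, Commute a b) : Commute x y := by
  rw [← sum_coeff_single x, ← sum_coeff_single y]
  exact Commute.sum_left _ _ _ fun a ha => Commute.sum_right _ _ _ fun b hb =>
    single_commute_single (h a ha b hb) (Commute.all _ _)

theorem MonoidAlgebra.commute_single_add_single {s a b : M} (hs : ∀ m, Commute s m)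
    (hs2 : s * s = 1) (hab : b * a = s * (a * b)) {u v r t : R} (huv : (1 - u) * (1 - v) = 0) :
    Commute (single a r + single (s * a) (u * r)) (single b t + single (s * b) (v * t)) := by
  classical
  have hmul : ∀ m n, m * (s * n) = s * (m * n) := fun m n => by
    rw [← mul_assoc, (hs m).symm.eq, mul_assoc]
  have hss : ∀ m, s * (s * m) = m := fun m => by rw [← mul_assoc, hs2, one_mul]
  simp only [Commute, SemiconjBy, add_mul, mul_add, single_mul_single, mul_assoc, hmul, hss, hab]
  have hab_coeff : r * t + u * (r * (v * t)) = v * (t * r) + t * (u * r) := by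
    linear_combination (r * t) * huv
  have hsab_coeff : u * (r * t) + r * (v * t) = t * r + v * (t * (u * r)) := by
    linear_combination -(r * t) * huv
  calc _ = single (a * b) (r * t + u * (r * (v * t)))
          + single (s * (a * b)) (u * (r * t) + r * (v * t)) := by
        simp only [single_add]; abel
    _ = single (a * b) (v * (t * r) + t * (u * r))
          + single (s * (a * b)) (t * r + v * (t * (u * r))) := by
        rw [hab_coeff, hsab_coeff]
    _ = _ := by simp only [single_add]; abel

end Commute

theorem one_sub_mul_one_sub_units_eq_zero {R : Type*} [CommRing R] (h4 : (4 : R) = 0) (u v : ℤˣ) :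
    (1 - ((u : ℤ) : R)) * (1 - ((v : ℤ) : R)) = 0 := by
  rcases Int.units_eq_one_or u with rfl | rfl <;> rcases Int.units_eq_one_or v with rfl | rfl <;>
    norm_num
  linear_combination h4

open scoped commutatorElement

namespace IsSLC

variable {G : Type*} [Group G] {s : G}

theorem mul_eq_of_not_commute (hG : IsSLC G s) {g h : G} (hgh : ¬Commute g h) :
    h * g = s * (g * h) := by
  obtain hs | hs := hG.2.2.1 h g
  · exact absurd (commutatorElement_eq_one_iff_mul_comm.mp hs).symm hgh
  · rw [← hs, commutatorElement_def]
    group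

theorem commute_left (hG : IsSLC G s) (g : G) : Commute s g := by
  obtain ⟨a, b, hab⟩ := hG.2.1
  have hconj : ⁅g * a * g⁻¹, g * b * g⁻¹⁆ = g * s * g⁻¹ := by
    rw [← hab, commutatorElement_def, commutatorElement_def]
    group
  obtain h1 | hs := hG.2.2.1 (g * a * g⁻¹) (g * b * g⁻¹)
  · exact absurd (by simpa [hconj] using h1) hG.1
  · rw [hconj] at hs
    exact (mul_inv_eq_iff_eq_mul.mp hs).symm

theorem mul_self (hG : IsSLC G s) : s * s = 1 := by
  obtain ⟨a, b, hab⟩ := hG.2.1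
  have hba : ⁅b, a⁆ = s⁻¹ := by rw [← commutatorElement_inv, hab]
  obtain h1 | hs := hG.2.2.1 b a
  · exact absurd (inv_eq_one.mp (hba ▸ h1)) hG.1
  · exact inv_eq_iff_mul_eq_one.mp (hba ▸ hs)

theorem mem_center (hG : IsSLC G s) : s ∈ Subgroup.center G :=
  Subgroup.mem_center_iff.mpr fun g => (hG.commute_left g).eq.symm

theorem involutive_of_canonical (hG : IsSLC G s) {st : G → G}
    (hstc : ∀ g ∈ Subgroup.center G, st g = g) (hstnc : ∀ g ∉ Subgroup.center G, st g = s * g) :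
    Function.Involutive st := by
  intro g
  by_cases hg : g ∈ Subgroup.center G
  · rw [hstc g hg, hstc g hg]
  · have hsg : s * g ∉ Subgroup.center G :=
      (Subgroup.mul_mem_cancel_left _ hG.mem_center).not.mpr hg
    rw [hstnc g hg, hstnc _ hsg, ← mul_assoc, hG.mul_self, one_mul]

theorem eq_single_add_single_of_mem_symmetricOrbitElements (hG : IsSLC G s) {R : Type*}
    [CommRing R] {σ : G →* ℤˣ} {st : G → G}
    (hstc : ∀ g ∈ Subgroup.center G, st g = g) (hstnc : ∀ g ∉ Subgroup.center G, st g = s * g)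
    {x : MonoidAlgebra R G} (hx : x ∈ symmetricOrbitElements st σ) {a : G}
    (ha : a ∈ x.coeff.support) (hac : a ∉ Subgroup.center G) :
    x = single a (x.coeff a) + single (s * a) (((σ a : ℤ) : R) * x.coeff a) := by
  have hst := hG.involutive_of_canonical hstc hstnc
  have hsta : st a = s * a := hstnc a hac
  rw [← hsta]
  exact eq_single_add_single_of_orientedSharp_eq hst hx.1
    (hsta ▸ fun h => hG.1 (mul_eq_right.mp h)) (hst.forall_eq_or_eq_of_mem hx.2 ha)

theorem commute_of_mem_symmetricOrbitElements (hG : IsSLC G s) {R : Type*} [CommRing R]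
    (h4 : (4 : R) = 0) {σ : G →* ℤˣ} {st : G → G}
    (hstc : ∀ g ∈ Subgroup.center G, st g = g) (hstnc : ∀ g ∉ Subgroup.center G, st g = s * g)
    {x y : MonoidAlgebra R G} (hx : x ∈ symmetricOrbitElements st σ)
    (hy : y ∈ symmetricOrbitElements st σ) : Commute x y := by
  by_cases hsupp : ∀ a ∈ x.coeff.support, ∀ b ∈ y.coeff.support, Commute a b
  · exact commute_of_forall_mem_support hsupp
  push Not at hsupp
  obtain ⟨a, ha, b, hb, hab⟩ := hsupp
  have hnc : ∀ {g h : G}, ¬Commute g h → g ∉ Subgroup.center G := fun hgh hg =>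
    hgh (Subgroup.mem_center_iff.mp hg _).symm
  rw [hG.eq_single_add_single_of_mem_symmetricOrbitElements hstc hstnc hx ha (hnc hab),
    hG.eq_single_add_single_of_mem_symmetricOrbitElements hstc hstnc hy hb
      (hnc (mt Commute.symm hab))]
  exact commute_single_add_single hG.commute_left hG.mul_self (hG.mul_eq_of_not_commute hab)
    (one_sub_mul_one_sub_units_eq_zero h4 _ _)

end IsSLC

theorem symmetric_commute_case_four_general {R : Type*} [CommRing R] {G : Type*} [Group G]
    (hchar : ringChar R = 4)
    (s : G) (hG : IsSLC G s)
    (σ : G →* ℤˣ)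
    (st : G → G)
    (hstc : ∀ g : G, g ∈ Subgroup.center G → st g = g)
    (hstnc : ∀ g : G, g ∉ Subgroup.center G → st g = s * g) :
    ∀ α β : MonoidAlgebra R G,
      orientedSharp st σ α = α → orientedSharp st σ β = β → α * β = β * α := by
  intro α β hα hβ
  have hst := hG.involutive_of_canonical hstc hstnc
  have h4 : (4 : R) = 0 := by exact_mod_cast (ringChar.spec R 4).mpr (by rw [hchar])
  exact Commute.span_left
    (fun x hx => Commute.span_right
      (fun y hy => hG.commute_of_mem_symmetricOrbitElements h4 hstc hstnc hx hy)
      β (mem_span_symmetricOrbitElements hst hβ))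
    α (mem_span_symmetricOrbitElements hst hα)

/-- if `char R = 4` and both `G` and its index-2 subgroup
`N = ker σ` are SLC groups, with `*` the canonical involution on `G`, then
the symmetric elements of `RG` commute. -/
theorem symmetric_commute_case_four {R : Type*} [CommRing R] {G : Type*} [Group G]
    (hchar : ringChar R = 4)
    (s : G) (hG : IsSLC G s)
    (σ : G →* ℤˣ) (hidx : σ.ker.index = 2)
    (hsN : s ∈ σ.ker) (hN : IsSLC σ.ker ⟨s, hsN⟩)
    (st : G → G)
    (hstc : ∀ g : G, g ∈ Subgroup.center G → st g = g)
    (hstnc : ∀ g : G, g ∉ Subgroup.center G → st g = s * g) :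
    ∀ α β : MonoidAlgebra R G,
      orientedSharp st σ α = α → orientedSharp st σ β = β → α * β = β * α :=
  symmetric_commute_case_four_general hchar s hG σ st hstc hstnc
end

section
/- Let G = N⟨a⟩ where N is an SLC group with unique nonidentity commutator s and canonical involution *, and a is a central element of G not in N with a* defined to be sa; extend * to G by (na)* = sn*a. Then * is an involution (anti-automorphism of order 2) on G. -/
/-! The commutator `s` has order two and commutes with `N`, so on `N` the canonical involution is
`n ↦ n` on the centre of `N` and `n ↦ s n` off it. Anti-multiplicativity on `N` is then a case check
on the centrality of `n`, `m` and `n m`; the two nontrivial cases are exactly the SLC axioms: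
commuting non-central elements have central product, and non-commuting ones satisfy `n m = s m n`.
As `a` is central and `a² ∈ N` is central, the rule `(x a)* = s x* a` holds for all `x ∈ G`, which
reduces both claims on `G` to the corresponding ones on `N`. -/

open scoped commutatorElement

section

variable {G : Type*} [Group G]

theorem Subgroup.mem_centralizer_iff_forall_mul_comm {N : Subgroup G} {n : G} :
    n ∈ centralizer (N : Set G) ↔ ∀ m ∈ N, n * m = m * n := by
  simp only [mem_centralizer_iff, SetLike.mem_coe, eq_comm]

/-- `N` is an SLC group with distinguished commutator `s`: its only commutators are `1` and `s`,
and it has "lack of commutativity": of two commuting elements one, or their product, is central. -/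
structure Subgroup.IsSLC (N : Subgroup G) (s : G) : Prop where
  commutator_eq : ∀ n ∈ N, ∀ m ∈ N, ⁅n, m⁆ = 1 ∨ ⁅n, m⁆ = s
  exists_commutator_eq : ∃ n ∈ N, ∃ m ∈ N, ⁅n, m⁆ = s
  mem_centralizer_of_mul_comm : ∀ n ∈ N, ∀ m ∈ N, n * m = m * n →
    n ∈ centralizer (N : Set G) ∨ m ∈ centralizer (N : Set G) ∨ n * m ∈ centralizer (N : Set G)

structure Subgroup.IsCanonicalInvolution (N : Subgroup G) (s : G) (st : G → G) : Prop where
  apply_of_mem_centralizer : ∀ n ∈ N, n ∈ centralizer (N : Set G) → st n = n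
  apply_of_notMem_centralizer : ∀ n ∈ N, n ∉ centralizer (N : Set G) → st n = s * n

namespace Subgroup.IsSLC

variable {N : Subgroup G} {s : G} (hN : N.IsSLC s)
include hN

theorem mem : s ∈ N := by
  obtain ⟨n, hn, m, hm, rfl⟩ := hN.exists_commutator_eq
  rw [commutatorElement_def]
  exact mul_mem (mul_mem (mul_mem hn hm) (inv_mem hn)) (inv_mem hm)

theorem mul_self_eq_one : s * s = 1 := by
  obtain ⟨n, hn, m, hm, hs⟩ := hN.exists_commutator_eq
  have hinv : s⁻¹ = ⁅m, n⁆ := by rw [← hs, commutatorElement_inv]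
  rcases hN.commutator_eq m hm n hn with h | h
  · rw [inv_eq_one.mp (hinv.trans h), one_mul]
  · exact mul_eq_one_iff_eq_inv.mpr (hinv.trans h).symm

theorem commute_of_mem {k : G} (hk : k ∈ N) : Commute s k := by
  rw [← commutatorElement_eq_one_iff_commute]
  rcases hN.commutator_eq s hN.mem k hk with h | h
  · exact h
  · -- `⁅s, k⁆ = s` forces `s = 1`
    rw [commutatorElement_def, mul_assoc, mul_assoc, mul_eq_left, ← mul_assoc,
      mul_inv_eq_one, mul_eq_left, inv_eq_one] at h
    rw [h, commutatorElement_one_left]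

theorem mem_centralizer : s ∈ centralizer (N : Set G) :=
  mem_centralizer_iff.mpr fun _ hk => (hN.commute_of_mem hk).eq.symm

theorem mul_mul_mul_eq {x : G} (hx : x ∈ N) (y : G) : s * x * (s * y) = x * y := by
  rw [(hN.commute_of_mem hx).eq, mul_assoc, ← mul_assoc s, hN.mul_self_eq_one, one_mul]

theorem mul_eq_of_not_commute {n m : G} (hn : n ∈ N) (hm : m ∈ N) (h : ¬Commute n m) :
    n * m = s * (m * n) := by
  rcases hN.commutator_eq n hn m hm with h' | h'
  · exact absurd (commutatorElement_eq_one_iff_commute.mp h') h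
  · rw [← h', commutatorElement_def]
    group

end Subgroup.IsSLC

namespace Subgroup.IsCanonicalInvolution

variable {N : Subgroup G} {s : G} {st : G → G} (hst : N.IsCanonicalInvolution s st)
include hst

theorem apply_mem (hs : s ∈ N) {n : G} (hn : n ∈ N) : st n ∈ N := by
  by_cases hc : n ∈ centralizer (N : Set G)
  · rwa [hst.apply_of_mem_centralizer n hn hc]
  · rw [hst.apply_of_notMem_centralizer n hn hc]
    exact mul_mem hs hn

theorem apply_apply_of_mem (hN : N.IsSLC s) {n : G} (hn : n ∈ N) : st (st n) = n := by
  by_cases hc : n ∈ centralizer (N : Set G)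
  · rw [hst.apply_of_mem_centralizer n hn hc, hst.apply_of_mem_centralizer n hn hc]
  · have hsn : s * n ∉ centralizer (N : Set G) := by rwa [mul_mem_cancel_left hN.mem_centralizer]
    rw [hst.apply_of_notMem_centralizer n hn hc,
      hst.apply_of_notMem_centralizer _ (mul_mem hN.mem hn) hsn, ← mul_assoc,
      hN.mul_self_eq_one, one_mul]

theorem apply_mul_of_mem_of_mem (hN : N.IsSLC s) {n m : G} (hn : n ∈ N) (hm : m ∈ N) :
    st (n * m) = st m * st n := by
  set C := centralizer (N : Set G)
  have hnm : n * m ∈ N := mul_mem hn hm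
  have commute_of_central {x y : G} (hx : x ∈ C) (hy : y ∈ N) : Commute x y :=
    (mem_centralizer_iff.mp hx y hy).symm
  by_cases hnC : n ∈ C <;> by_cases hmC : m ∈ C
  · rw [hst.apply_of_mem_centralizer _ hnm (mul_mem hnC hmC),
      hst.apply_of_mem_centralizer n hn hnC, hst.apply_of_mem_centralizer m hm hmC,
      (commute_of_central hnC hm).eq]
  · have hnmC : n * m ∉ C := by rwa [mul_mem_cancel_left hnC]
    rw [hst.apply_of_notMem_centralizer _ hnm hnmC, hst.apply_of_mem_centralizer n hn hnC,
      hst.apply_of_notMem_centralizer m hm hmC, (commute_of_central hnC hm).eq, mul_assoc]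
  · have hnmC : n * m ∉ C := by rwa [mul_mem_cancel_right hmC]
    rw [hst.apply_of_notMem_centralizer _ hnm hnmC, hst.apply_of_mem_centralizer m hm hmC,
      hst.apply_of_notMem_centralizer n hn hnC, (commute_of_central hmC (mul_mem hN.mem hn)).eq,
      mul_assoc]
  · rw [hst.apply_of_notMem_centralizer m hm hmC, hst.apply_of_notMem_centralizer n hn hnC,
      hN.mul_mul_mul_eq hm]
    by_cases hcomm : Commute n m
    · have hnmC : n * m ∈ C :=
        ((hN.mem_centralizer_of_mul_comm n hn m hm hcomm.eq).resolve_left hnC).resolve_left hmC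
      rw [hst.apply_of_mem_centralizer _ hnm hnmC, hcomm.eq]
    · have hnmC : n * m ∉ C := fun h =>
        hcomm (by simpa using (commute_of_central h hm).mul_left (Commute.refl m).inv_left)
      rw [hst.apply_of_notMem_centralizer _ hnm hnmC, hN.mul_eq_of_not_commute hn hm hcomm,
        ← mul_assoc, hN.mul_self_eq_one, one_mul]

end Subgroup.IsCanonicalInvolution

theorem Subgroup.mul_self_mem_of_forall_mem_or_exists_mul {N : Subgroup G} {a : G}
    (hgen : ∀ g : G, g ∈ N ∨ ∃ n ∈ N, g = n * a) : a * a ∈ N := by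
  rcases hgen (a * a) with h | ⟨n, hn, h⟩
  · exact h
  · rw [mul_right_cancel h]
    exact mul_mem hn hn

namespace Subgroup.IsCanonicalInvolution

variable {N : Subgroup G} {s a : G} {st : G → G} (hst : N.IsCanonicalInvolution s st)
  (hN : N.IsSLC s) (ha : a ∈ center G) (hgen : ∀ g : G, g ∈ N ∨ ∃ n ∈ N, g = n * a)
  (h3 : ∀ n ∈ N, st (n * a) = s * st n * a)
include hst hN ha hgen h3

theorem apply_mul_central (x : G) : st (x * a) = s * st x * a := by
  have hac (g : G) : Commute a g := (mem_center_iff.mp ha g).symm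
  rcases hgen x with hx | ⟨n, hn, rfl⟩
  · exact h3 x hx
  have haa : a * a ∈ N := mul_self_mem_of_forall_mem_or_exists_mul hgen
  have haaC : a * a ∈ centralizer (N : Set G) := center_le_centralizer _ (mul_mem ha ha)
  rw [h3 n hn, mul_assoc n a a, hst.apply_mul_of_mem_of_mem hN hn haa,
    hst.apply_of_mem_centralizer _ haa haaC]
  simp only [← mul_assoc, hN.mul_self_eq_one, one_mul]
  rw [((hac _).mul_left (hac _)).eq, mul_assoc]

theorem apply_mul_of_mem_right (g : G) {m : G} (hm : m ∈ N) : st (g * m) = st m * st g := by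
  rcases hgen g with hg | ⟨n, hn, rfl⟩
  · exact hst.apply_mul_of_mem_of_mem hN hg hm
  rw [mul_assoc, ← (mem_center_iff.mp ha m), ← mul_assoc, h3 _ (mul_mem hn hm),
    hst.apply_mul_of_mem_of_mem hN hn hm, h3 n hn]
  simp only [← mul_assoc]
  rw [(hN.commute_of_mem (hst.apply_mem hN.mem hm)).eq]

theorem apply_mul (g h : G) : st (g * h) = st h * st g := by
  rcases hgen h with hh | ⟨m, hm, rfl⟩
  · exact hst.apply_mul_of_mem_right hN ha hgen h3 g hh
  rw [← mul_assoc, hst.apply_mul_central hN ha hgen h3,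
    hst.apply_mul_of_mem_right hN ha hgen h3 g hm, h3 m hm]
  simp only [← mul_assoc]
  rw [mul_assoc _ (st g) a, mem_center_iff.mp ha (st g), ← mul_assoc]

theorem apply_apply (g : G) : st (st g) = g := by
  rcases hgen g with hg | ⟨n, hn, rfl⟩
  · exact hst.apply_apply_of_mem hN hg
  rw [h3 n hn, hst.apply_mul_central hN ha hgen h3,
    hst.apply_mul_of_mem_of_mem hN hN.mem (hst.apply_mem hN.mem hn), hst.apply_apply_of_mem hN hn,
    hst.apply_of_mem_centralizer s hN.mem hN.mem_centralizer, ← (hN.commute_of_mem hn).eq,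
    ← mul_assoc, hN.mul_self_eq_one, one_mul]

end Subgroup.IsCanonicalInvolution

end

theorem slc_extension_is_involution_general {G : Type*} [Group G]
    (N : Subgroup G) (s : G)
    (huniq : ∀ n ∈ N, ∀ m ∈ N, ⁅n, m⁆ = 1 ∨ ⁅n, m⁆ = s)
    (hex : ∃ n ∈ N, ∃ m ∈ N, ⁅n, m⁆ = s)
    (hLC : ∀ n ∈ N, ∀ m ∈ N, n * m = m * n →
      (∀ k ∈ N, n * k = k * n) ∨ (∀ k ∈ N, m * k = k * m) ∨
        (∀ k ∈ N, (n * m) * k = k * (n * m)))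
    (a : G) (haC : a ∈ Subgroup.center G)
    (hgen : ∀ g : G, g ∈ N ∨ ∃ n ∈ N, g = n * a)
    (st : G → G)
    (h1 : ∀ n ∈ N, (∀ m ∈ N, n * m = m * n) → st n = n)
    (h2 : ∀ n ∈ N, ¬(∀ m ∈ N, n * m = m * n) → st n = s * n)
    (h3 : ∀ n ∈ N, st (n * a) = s * st n * a) :
    (∀ g h : G, st (g * h) = st h * st g) ∧ (∀ g : G, st (st g) = g) := by
  simp only [← Subgroup.mem_centralizer_iff_forall_mul_comm] at hLC h1 h2
  have hN : N.IsSLC s := ⟨huniq, hex, hLC⟩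
  have hst : N.IsCanonicalInvolution s st := ⟨h1, h2⟩
  exact ⟨hst.apply_mul hN haC hgen h3, hst.apply_apply hN haC hgen h3⟩

/-- let `G = N⟨a⟩` with `N` SLC (unique nonidentity commutator `s`,
canonical involution) and `a` central, `a ∉ N`, `a* = sa`; the extension of the
canonical involution of `N` to `G` by `(na)* = s n* a` is an involution on `G`. -/
theorem slc_extension_is_involution {G : Type*} [Group G]
    (N : Subgroup G) (s : G) (hsN : s ∈ N) (hs1 : s ≠ 1)
    (huniq : ∀ n ∈ N, ∀ m ∈ N, ⁅n, m⁆ = 1 ∨ ⁅n, m⁆ = s)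
    (hex : ∃ n ∈ N, ∃ m ∈ N, ⁅n, m⁆ = s)
    (hLC : ∀ n ∈ N, ∀ m ∈ N, n * m = m * n →
      (∀ k ∈ N, n * k = k * n) ∨ (∀ k ∈ N, m * k = k * m) ∨
        (∀ k ∈ N, (n * m) * k = k * (n * m)))
    (a : G) (haC : a ∈ Subgroup.center G) (haN : a ∉ N)
    (hgen : ∀ g : G, g ∈ N ∨ ∃ n ∈ N, g = n * a)
    (st : G → G)
    (h1 : ∀ n ∈ N, (∀ m ∈ N, n * m = m * n) → st n = n)
    (h2 : ∀ n ∈ N, ¬(∀ m ∈ N, n * m = m * n) → st n = s * n)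
    (h3 : ∀ n ∈ N, st (n * a) = s * st n * a) :
    (∀ g h : G, st (g * h) = st h * st g) ∧ (∀ g : G, st (st g) = g) :=
  slc_extension_is_involution_general N s huniq hex hLC a haC hgen st h1 h2 h3
end
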